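/- arXiv:2511.01719 — 10 statements merged into one kernel-verified Lean document; each statement's English description precedes it below -/
import Mathlib

section
/- If a finite simple graph G without isolated vertices has a unique minimum dominating set D, then every vertex v in D has at least two exterior private neighbors with respect to D, i.e., |N(v) \ N[D \ {v}]| ≥ 2. -/
/-- `D` is a dominating set of `G`. -/
def IsDomSet {V : Type*} (G : SimpleGraph V) (D : Finset V) : Prop :=
  ∀ v, v ∉ D → ∃ u ∈ D, G.Adj u v

/-- `D` is the unique minimum dominating set of `G`. -/
def IsUMDS {V : Type*} (G : SimpleGraph V) (D : Finset V) : Prop :=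
  IsDomSet G D ∧ (∀ D', IsDomSet G D' → D.card ≤ D'.card) ∧
    (∀ D', IsDomSet G D' → D'.card = D.card → D' = D)

theorem stmt0 {V : Type*} [Fintype V] (G : SimpleGraph V)
    (hiso : ∀ v : V, ∃ u, G.Adj u v)
    (D : Finset V) (hD : IsUMDS G D) :
    ∀ v ∈ D,
      2 ≤ Set.ncard {u : V | u ∉ D ∧ G.Adj v u ∧ ∀ d ∈ D, d ≠ v → ¬ G.Adj d u} := by
  classical
  intro v hv
  obtain ⟨hdom, hmin, huniq⟩ := hD
  set P : Set V := {u : V | u ∉ D ∧ G.Adj v u ∧ ∀ d ∈ D, d ≠ v → ¬ G.Adj d u} with hP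
  by_contra hlt
  push_neg at hlt
  have hPle : P.ncard ≤ 1 := by omega
  -- any two distinct members of P would contradict hPle
  have htwo : ∀ a ∈ P, ∀ b ∈ P, a = b := by
    intro a ha b hb
    by_contra hne
    have : 1 < P.ncard := (Set.one_lt_ncard (Set.toFinite P)).mpr ⟨a, ha, b, hb, hne⟩
    omega
  -- key dominating property: any x ∉ D outside P has a dominator ≠ v
  have hkey : ∀ x, x ∉ D → x ∉ P → ∃ d ∈ D, d ≠ v ∧ G.Adj d x := by
    intro x hxD hxP
    simp only [hP, Set.mem_setOf_eq, not_and, not_forall] at hxP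
    by_cases hvx : G.Adj v x
    · obtain ⟨d, hd, hdv, hadj⟩ := hxP hxD hvx
      exact ⟨d, hd, hdv, not_not.mp hadj⟩
    · obtain ⟨d, hd, hadj⟩ := hdom x hxD
      exact ⟨d, hd, fun h => hvx (h ▸ hadj), hadj⟩
  -- main contradiction via a swap vertex u with u ∉ D, G.Adj v u
  have hswap : ∀ u, u ∉ D → G.Adj v u → (∀ x ∈ P, x = u) → False := by
    intro u huD hvu hPu
    set D' : Finset V := insert u (D.erase v) with hD'
    have hdomD' : IsDomSet G D' := by
      intro x hx
      simp only [hD', Finset.mem_insert, Finset.mem_erase] at hx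
      push_neg at hx
      obtain ⟨hxu, hx2⟩ := hx
      by_cases hxv : x = v
      · exact ⟨u, Finset.mem_insert_self _ _, hxv ▸ hvu.symm⟩
      · have hxD : x ∉ D := hx2 hxv
        have hxP : x ∉ P := fun h => hxu (hPu x h)
        obtain ⟨d, hd, hdv, hadj⟩ := hkey x hxD hxP
        exact ⟨d, Finset.mem_insert_of_mem (Finset.mem_erase.mpr ⟨hdv, hd⟩), hadj⟩
    have hcard : D'.card = D.card := by
      rw [hD', Finset.card_insert_of_notMem (fun h => huD (Finset.mem_of_mem_erase h)),
        Finset.card_erase_of_mem hv]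
      have : 1 ≤ D.card := Finset.card_pos.mpr ⟨v, hv⟩
      omega
    have heq : D' = D := huniq D' hdomD' hcard
    have : v ∈ D' := heq ▸ hv
    simp only [hD', Finset.mem_insert, Finset.mem_erase] at this
    rcases this with h | h
    · exact G.irrefl (h ▸ hvu)
    · exact h.1 rfl
  by_cases hPne : P.Nonempty
  · obtain ⟨u, hu⟩ := hPne
    exact hswap u hu.1 hu.2.1 (fun x hx => htwo x hx u hu)
  · -- P empty
    have hPe : ∀ x, x ∉ P := fun x hx => hPne ⟨x, hx⟩
    by_cases hnb : ∃ w ∈ D, G.Adj w v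
    · -- D.erase v is a smaller dominating set
      obtain ⟨w, hw, hwv⟩ := hnb
      have hwvne : w ≠ v := fun h => G.irrefl (h ▸ hwv)
      have hdomE : IsDomSet G (D.erase v) := by
        intro x hx
        simp only [Finset.mem_erase] at hx
        push_neg at hx
        by_cases hxv : x = v
        · exact ⟨w, Finset.mem_erase.mpr ⟨hwvne, hw⟩, hxv ▸ hwv⟩
        · have hxD : x ∉ D := hx hxv
          obtain ⟨d, hd, hdv, hadj⟩ := hkey x hxD (hPe x)
          exact ⟨d, Finset.mem_erase.mpr ⟨hdv, hd⟩, hadj⟩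
      have := hmin _ hdomE
      rw [Finset.card_erase_of_mem hv] at this
      have : 1 ≤ D.card := Finset.card_pos.mpr ⟨v, hv⟩
      omega
    · push_neg at hnb
      obtain ⟨u, hu⟩ := hiso v
      have huD : u ∉ D := fun h => hnb u h hu
      exact hswap u huD hu.symm (fun x hx => absurd hx (hPe x))
end

section
/- If a finite simple graph G of order n without isolated vertices has a unique minimum dominating set of size γ, then n ≥ 3γ. -/
theorem stmt1 {V : Type*} [Fintype V] (G : SimpleGraph V)
    (hiso : ∀ v : V, ∃ u, G.Adj u v)
    (D : Finset V) (γ : ℕ) (hγ : D.card = γ) (hD : IsUMDS G D) :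
    3 * γ ≤ Fintype.card V := by
  classical
  subst hγ
  have hmin := hD.2.1
  have huniq := hD.2.2
  set P : V → Finset V := fun v => Finset.univ.filter
    (fun x => x ∉ D ∧ G.Adj v x ∧ ∀ d ∈ D, d ≠ v → ¬ G.Adj d x) with hP
  have hPmem : ∀ v x, x ∈ P v ↔ x ∉ D ∧ G.Adj v x ∧ ∀ d ∈ D, d ≠ v → ¬ G.Adj d x := by
    intro v x; simp [hP]
  have contra : ∀ D' : Finset V, IsDomSet G D' → D'.card ≤ D.card → D' = D := by
    intro D' hdom hcard
    exact huniq D' hdom (le_antisymm hcard (hmin D' hdom))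
  have key : ∀ v ∈ D, 2 ≤ (P v).card := by
    intro v hv
    by_contra h
    push_neg at h
    have hle : (P v).card ≤ 1 := by omega
    rw [Finset.card_le_one] at hle
    rcases (P v).eq_empty_or_nonempty with hemp | ⟨w, hw⟩
    · -- no external private neighbor
      have hno : ∀ x, x ∉ D → G.Adj v x → ∃ d ∈ D, d ≠ v ∧ G.Adj d x := by
        intro x hxD hadj
        by_contra hc
        push_neg at hc
        have hxP : x ∈ P v := (hPmem v x).2 ⟨hxD, hadj, fun d hd hdv => hc d hd hdv⟩
        simp [hemp] at hxP
      obtain ⟨u, hu⟩ := hiso v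
      have huv : u ≠ v := hu.ne
      by_cases huD : u ∈ D
      · have hdom : IsDomSet G (D.erase v) := by
          intro x hx
          by_cases hxv : x = v
          · exact ⟨u, Finset.mem_erase.2 ⟨huv, huD⟩, hxv ▸ hu⟩
          · have hxD : x ∉ D := fun hxD => hx (Finset.mem_erase.2 ⟨hxv, hxD⟩)
            obtain ⟨d, hd, hadj⟩ := hD.1 x hxD
            by_cases hdv : d = v
            · obtain ⟨d', hd', hdv', hadj'⟩ := hno x hxD (hdv ▸ hadj)
              exact ⟨d', Finset.mem_erase.2 ⟨hdv', hd'⟩, hadj'⟩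
            · exact ⟨d, Finset.mem_erase.2 ⟨hdv, hd⟩, hadj⟩
        have h1 := hmin _ hdom
        have h2 := Finset.card_erase_lt_of_mem hv
        omega
      · set D' := insert u (D.erase v) with hD'
        have hdom : IsDomSet G D' := by
          intro x hx
          rw [hD', Finset.mem_insert] at hx
          push_neg at hx
          obtain ⟨hxu, hxe⟩ := hx
          by_cases hxv : x = v
          · exact ⟨u, Finset.mem_insert_self _ _, hxv ▸ hu⟩
          · have hxD : x ∉ D := fun hxD => hxe (Finset.mem_erase.2 ⟨hxv, hxD⟩)
            obtain ⟨d, hd, hadj⟩ := hD.1 x hxD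
            by_cases hdv : d = v
            · obtain ⟨d', hd', hdv', hadj'⟩ := hno x hxD (hdv ▸ hadj)
              exact ⟨d', Finset.mem_insert_of_mem (Finset.mem_erase.2 ⟨hdv', hd'⟩), hadj'⟩
            · exact ⟨d, Finset.mem_insert_of_mem (Finset.mem_erase.2 ⟨hdv, hd⟩), hadj⟩
        have hcard : D'.card ≤ D.card := by
          have h1 := Finset.card_insert_le u (D.erase v)
          have h2 := Finset.card_erase_of_mem hv
          have h3 : 1 ≤ D.card := Finset.card_pos.2 ⟨v, hv⟩
          rw [hD']
          omega
        have heq := contra D' hdom hcard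
        have hvD' : v ∈ D' := heq ▸ hv
        rw [hD', Finset.mem_insert] at hvD'
        rcases hvD' with h1 | h2
        · exact huv h1.symm
        · exact (Finset.mem_erase.1 h2).1 rfl
    · -- the only possible external private neighbor is w
      obtain ⟨hwD, hwadj, _⟩ := (hPmem v w).1 hw
      have honly : ∀ x, x ∉ D → G.Adj v x → x ≠ w → ∃ d ∈ D, d ≠ v ∧ G.Adj d x := by
        intro x hxD hadj hxw
        by_contra hc
        push_neg at hc
        have hxP : x ∈ P v := (hPmem v x).2 ⟨hxD, hadj, fun d hd hdv => hc d hd hdv⟩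
        exact hxw (hle x hxP w hw)
      set D' := insert w (D.erase v) with hD'
      have hdom : IsDomSet G D' := by
        intro x hx
        rw [hD', Finset.mem_insert] at hx
        push_neg at hx
        obtain ⟨hxw, hxe⟩ := hx
        by_cases hxv : x = v
        · exact ⟨w, Finset.mem_insert_self _ _, hxv ▸ hwadj.symm⟩
        · have hxD : x ∉ D := fun hxD => hxe (Finset.mem_erase.2 ⟨hxv, hxD⟩)
          obtain ⟨d, hd, hadj⟩ := hD.1 x hxD
          by_cases hdv : d = v
          · obtain ⟨d', hd', hdv', hadj'⟩ := honly x hxD (hdv ▸ hadj) hxw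
            exact ⟨d', Finset.mem_insert_of_mem (Finset.mem_erase.2 ⟨hdv', hd'⟩), hadj'⟩
          · exact ⟨d, Finset.mem_insert_of_mem (Finset.mem_erase.2 ⟨hdv, hd⟩), hadj⟩
      have hcard : D'.card ≤ D.card := by
        have h1 := Finset.card_insert_le w (D.erase v)
        have h2 := Finset.card_erase_of_mem hv
        have h3 : 1 ≤ D.card := Finset.card_pos.2 ⟨v, hv⟩
        rw [hD']
        omega
      have heq := contra D' hdom hcard
      have hvD' : v ∈ D' := heq ▸ hv
      rw [hD', Finset.mem_insert] at hvD'
      rcases hvD' with h1 | h2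
      · exact hwD (h1 ▸ hv)
      · exact (Finset.mem_erase.1 h2).1 rfl
  have hdisj : ∀ v1 ∈ D, ∀ v2 ∈ D, v1 ≠ v2 → Disjoint (P v1) (P v2) := by
    intro v1 h1 v2 h2 hne
    rw [Finset.disjoint_left]
    intro x hx1 hx2
    obtain ⟨_, hadj1, _⟩ := (hPmem v1 x).1 hx1
    obtain ⟨_, _, hpriv2⟩ := (hPmem v2 x).1 hx2
    exact hpriv2 v1 h1 hne hadj1
  have hbi : (D.biUnion P).card = ∑ v ∈ D, (P v).card :=
    Finset.card_biUnion hdisj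
  have hDdisj : Disjoint D (D.biUnion P) := by
    rw [Finset.disjoint_right]
    intro x hx
    obtain ⟨v, hv, hxv⟩ := Finset.mem_biUnion.1 hx
    exact ((hPmem v x).1 hxv).1
  have h1 : (D ∪ D.biUnion P).card ≤ Fintype.card V := Finset.card_le_univ _
  rw [Finset.card_union_of_disjoint hDdisj, hbi] at h1
  have h2 : D.card * 2 ≤ ∑ v ∈ D, (P v).card := by
    calc D.card * 2 = ∑ _v ∈ D, 2 := by rw [Finset.sum_const, smul_eq_mul, mul_comm]
    _ ≤ _ := Finset.sum_le_sum key
  omega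
end

section
/- Let G be a bipartite graph with partite sets A and B where A = {x, y} has exactly 2 vertices and |B| = n − 2, and suppose {x, y} is the unique minimum dominating set of G and G has no isolated vertices. Then G has at most 2(n−2) − 4 edges. -/
/-- Key lemma: `x` has at least two private neighbors. -/
lemma aux_priv {V : Type*} [Fintype V] [DecidableEq V] (G : SimpleGraph V)
    (x y : V) (hxy : x ≠ y)
    (hbip : ∀ u v : V, G.Adj u v → ((u = x ∨ u = y) ↔ ¬ (v = x ∨ v = y)))
    (hiso : ∀ v : V, ∃ u, G.Adj u v)
    (hD : IsUMDS G {x, y}) :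
    ∃ p q : V, p ≠ q ∧ G.Adj x p ∧ ¬ G.Adj y p ∧ G.Adj x q ∧ ¬ G.Adj y q := by
  by_contra hcon
  push_neg at hcon
  -- hcon : ∀ p q, p ≠ q → Adj x p → ¬Adj y p → Adj x q → ¬Adj y q → False (roughly)
  have huniq : ∀ p q : V, G.Adj x p → ¬ G.Adj y p → G.Adj x q → ¬ G.Adj y q → p = q := by
    intro p q hp1 hp2 hq1 hq2
    by_contra hne
    exact hq2 (hcon p q hne hp1 hp2 hq1)
  -- pick a candidate c : a neighbor of x, and if a private neighbor exists, that one
  obtain ⟨u0, hu0⟩ := hiso x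
  have hu0' : G.Adj x u0 := hu0.symm
  have hc : ∃ c, G.Adj x c ∧ ∀ v, G.Adj x v → ¬ G.Adj y v → v = c := by
    by_cases hex : ∃ p, G.Adj x p ∧ ¬ G.Adj y p
    · obtain ⟨p, hp1, hp2⟩ := hex
      exact ⟨p, hp1, fun v h1 h2 => huniq v p h1 h2 hp1 hp2⟩
    · push_neg at hex
      exact ⟨u0, hu0', fun v h1 h2 => absurd (hex v h1) h2⟩
  obtain ⟨c, hxc, hcuniq⟩ := hc
  -- c is not x nor y
  have hcB : ¬ (c = x ∨ c = y) := (hbip x c hxc).mp (Or.inl rfl)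
  push_neg at hcB
  obtain ⟨hcx, hcy⟩ := hcB
  -- {y, c} is a dominating set
  have hdom : IsDomSet G ({y, c} : Finset V) := by
    intro v hv
    simp only [Finset.mem_insert, Finset.mem_singleton, not_or] at hv
    obtain ⟨hvy, hvc⟩ := hv
    by_cases hvx : v = x
    · exact ⟨c, by simp, by rw [hvx]; exact hxc.symm⟩
    · have hvnmem : v ∉ ({x, y} : Finset V) := by simp [hvx, hvy]
      obtain ⟨u, hu, huv⟩ := hD.1 v hvnmem
      simp only [Finset.mem_insert, Finset.mem_singleton] at hu
      rcases hu with rfl | rfl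
      · -- u = x dominates v
        by_cases hyv : G.Adj y v
        · exact ⟨y, by simp, hyv⟩
        · exact absurd (hcuniq v huv hyv) hvc
      · exact ⟨u, by simp, huv⟩
  have hcard2 : ({y, c} : Finset V).card = ({x, y} : Finset V).card := by
    rw [Finset.card_insert_of_notMem (by simp [Ne.symm hcy]),
      Finset.card_insert_of_notMem (by simp [hxy]), Finset.card_singleton,
      Finset.card_singleton]
  have heq := hD.2.2 _ hdom hcard2
  have hxmem : x ∈ ({y, c} : Finset V) := by rw [heq]; simp
  simp only [Finset.mem_insert, Finset.mem_singleton] at hxmem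
  rcases hxmem with h | h
  · exact hxy h
  · exact hcx h.symm

theorem stmt9 {V : Type*} [Fintype V] [DecidableEq V] (G : SimpleGraph V) (n : ℕ)
    (hn : Fintype.card V = n)
    (x y : V) (hxy : x ≠ y)
    -- `G` is bipartite with partite sets `A = {x, y}` and `B = V \ {x, y}`:
    (hbip : ∀ u v : V, G.Adj u v → ((u = x ∨ u = y) ↔ ¬ (v = x ∨ v = y)))
    (hiso : ∀ v : V, ∃ u, G.Adj u v)
    (hD : IsUMDS G {x, y}) :
    G.edgeSet.ncard ≤ 2 * (n - 2) - 4 := by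
  classical
  haveI : DecidableRel G.Adj := Classical.decRel _
  -- private neighbors of x
  obtain ⟨p₁, p₂, hpne, hxp₁, hyp₁, hxp₂, hyp₂⟩ := aux_priv G x y hxy hbip hiso hD
  -- private neighbors of y (by swapping roles)
  have hbip' : ∀ u v : V, G.Adj u v → ((u = y ∨ u = x) ↔ ¬ (v = y ∨ v = x)) := by
    intro u v h
    have := hbip u v h
    tauto
  have hD' : IsUMDS G ({y, x} : Finset V) := by
    rwa [Finset.pair_comm]
  obtain ⟨q₁, q₂, hqne, hyq₁, hxq₁, hyq₂, hxq₂⟩ :=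
    aux_priv G y x hxy.symm hbip' hiso hD'
  -- all these are in B
  set Bf : Finset V := Finset.univ \ {x, y} with hBf
  have hmemB : ∀ a v : V, (a = x ∨ a = y) → G.Adj a v → v ∈ Bf := by
    intro a v ha h
    have := (hbip a v h).mp ha
    push_neg at this
    simp [hBf, this.1, this.2]
  have hBcard : Bf.card = n - 2 := by
    rw [hBf, Finset.card_sdiff_of_subset (Finset.subset_univ _), Finset.card_univ, hn,
      Finset.card_insert_of_notMem (by simp [hxy]), Finset.card_singleton]
  -- degree bounds
  have hdegx : G.degree x ≤ Bf.card - 2 := by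
    have hsub : G.neighborFinset x ⊆ Bf \ {q₁, q₂} := by
      intro v hv
      rw [SimpleGraph.mem_neighborFinset] at hv
      have hvB := hmemB x v (Or.inl rfl) hv
      have hv1 : v ≠ q₁ := by rintro rfl; exact hxq₁ hv
      have hv2 : v ≠ q₂ := by rintro rfl; exact hxq₂ hv
      simp [Finset.mem_sdiff, hvB, hv1, hv2]
    have hq12 : ({q₁, q₂} : Finset V) ⊆ Bf := by
      intro v hv
      simp only [Finset.mem_insert, Finset.mem_singleton] at hv
      rcases hv with rfl | rfl
      · exact hmemB y v (Or.inr rfl) hyq₁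
      · exact hmemB y v (Or.inr rfl) hyq₂
    calc G.degree x = (G.neighborFinset x).card := (G.card_neighborFinset_eq_degree x).symm
      _ ≤ (Bf \ {q₁, q₂}).card := Finset.card_le_card hsub
      _ = Bf.card - ({q₁, q₂} : Finset V).card := Finset.card_sdiff_of_subset hq12
      _ = Bf.card - 2 := by
          rw [Finset.card_insert_of_notMem (by simp [hqne]), Finset.card_singleton]
  have hdegy : G.degree y ≤ Bf.card - 2 := by
    have hsub : G.neighborFinset y ⊆ Bf \ {p₁, p₂} := by
      intro v hv
      rw [SimpleGraph.mem_neighborFinset] at hv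
      have hvB := hmemB y v (Or.inr rfl) hv
      have hv1 : v ≠ p₁ := by rintro rfl; exact hyp₁ hv
      have hv2 : v ≠ p₂ := by rintro rfl; exact hyp₂ hv
      simp [Finset.mem_sdiff, hvB, hv1, hv2]
    have hp12 : ({p₁, p₂} : Finset V) ⊆ Bf := by
      intro v hv
      simp only [Finset.mem_insert, Finset.mem_singleton] at hv
      rcases hv with rfl | rfl
      · exact hmemB x v (Or.inl rfl) hxp₁
      · exact hmemB x v (Or.inl rfl) hxp₂
    calc G.degree y = (G.neighborFinset y).card := (G.card_neighborFinset_eq_degree y).symm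
      _ ≤ (Bf \ {p₁, p₂}).card := Finset.card_le_card hsub
      _ = Bf.card - ({p₁, p₂} : Finset V).card := Finset.card_sdiff_of_subset hp12
      _ = Bf.card - 2 := by
          rw [Finset.card_insert_of_notMem (by simp [hpne]), Finset.card_singleton]
  -- |B| ≥ 4
  have hpq : ∀ i j : V, G.Adj x i → ¬ G.Adj x j → i ≠ j := by
    rintro i j h1 h2 rfl; exact h2 h1
  have hB4 : 4 ≤ Bf.card := by
    have hsub : ({p₁, p₂, q₁, q₂} : Finset V) ⊆ Bf := by
      intro v hv
      simp only [Finset.mem_insert, Finset.mem_singleton] at hv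
      rcases hv with rfl | rfl | rfl | rfl
      · exact hmemB x v (Or.inl rfl) hxp₁
      · exact hmemB x v (Or.inl rfl) hxp₂
      · exact hmemB y v (Or.inr rfl) hyq₁
      · exact hmemB y v (Or.inr rfl) hyq₂
    have h4 : ({p₁, p₂, q₁, q₂} : Finset V).card = 4 := by
      have h1 : p₁ ≠ q₁ := hpq p₁ q₁ hxp₁ hxq₁
      have h2 : p₁ ≠ q₂ := hpq p₁ q₂ hxp₁ hxq₂
      have h3 : p₂ ≠ q₁ := hpq p₂ q₁ hxp₂ hxq₁
      have h4 : p₂ ≠ q₂ := hpq p₂ q₂ hxp₂ hxq₂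
      rw [Finset.card_insert_of_notMem (by simp [hpne, h1, h2]),
        Finset.card_insert_of_notMem (by simp [h3, h4]),
        Finset.card_insert_of_notMem (by simp [hqne]), Finset.card_singleton]
    calc 4 = ({p₁, p₂, q₁, q₂} : Finset V).card := h4.symm
      _ ≤ Bf.card := Finset.card_le_card hsub
  -- edge count
  have hEdge : G.edgeSet.ncard = G.edgeFinset.card := by
    rw [SimpleGraph.edgeFinset, Set.ncard_eq_toFinset_card']
  have hsubE : G.edgeFinset ⊆ G.incidenceFinset x ∪ G.incidenceFinset y := by
    intro e he
    induction e using Sym2.ind with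
    | _ u v =>
      rw [SimpleGraph.mem_edgeFinset, SimpleGraph.mem_edgeSet] at he
      have := hbip u v he
      rw [Finset.mem_union, SimpleGraph.mem_incidenceFinset,
        SimpleGraph.mem_incidenceFinset]
      by_cases hu : u = x ∨ u = y
      · rcases hu with rfl | rfl
        · exact Or.inl ⟨he, Sym2.mem_mk_left _ _⟩
        · exact Or.inr ⟨he, Sym2.mem_mk_left _ _⟩
      · have hv := (hbip v u he.symm).mpr hu
        rcases hv with rfl | rfl
        · exact Or.inl ⟨he, Sym2.mem_mk_right _ _⟩
        · exact Or.inr ⟨he, Sym2.mem_mk_right _ _⟩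
  have hEcard : G.edgeFinset.card ≤ G.degree x + G.degree y := by
    calc G.edgeFinset.card ≤ (G.incidenceFinset x ∪ G.incidenceFinset y).card :=
        Finset.card_le_card hsubE
      _ ≤ (G.incidenceFinset x).card + (G.incidenceFinset y).card :=
        Finset.card_union_le _ _
      _ = G.degree x + G.degree y := by
          rw [SimpleGraph.card_incidenceFinset_eq_degree,
            SimpleGraph.card_incidenceFinset_eq_degree]
  rw [hEdge]
  omega
end

section
/- Let G be a bipartite graph of order n ≥ 6 with a unique minimum dominating set {x, y} where x and y lie in different partite sets and are adjacent. Then the number of edges of G is at most n − 1 + ⌈(n−2)/2⌉·⌊(n−2)/2⌋ − 2(n−2)/3, and in particular at most n(n−2)/4 if n is even and at most (n−1)²/4 if n is odd. -/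
open Finset

theorem Bool.eq_of_ne_of_ne {a b c : Bool} (hab : a ≠ b) (hac : a ≠ c) : b = c := by
  revert a b c; decide

theorem inv_add_inv_le_three_halves {a b : ℕ} (ha : 1 ≤ a) (hb : 1 ≤ b) (hab : a ≠ 1 ∨ b ≠ 1) :
    (a : ℚ)⁻¹ + (b : ℚ)⁻¹ ≤ 3 / 2 := by
  have key : ∀ {a b : ℕ}, 2 ≤ a → 1 ≤ b → (a : ℚ)⁻¹ + (b : ℚ)⁻¹ ≤ 3 / 2 := by
    intro a b ha hb
    have h1 : (a : ℚ)⁻¹ ≤ 2⁻¹ := inv_anti₀ (by norm_num) (by exact_mod_cast ha)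
    have h2 : (b : ℚ)⁻¹ ≤ 1 := inv_le_one_of_one_le₀ (by exact_mod_cast hb)
    linarith
  rcases hab with hab | hab
  · exact key (by omega) hb
  · linarith [key (a := b) (b := a) (by omega) ha]

theorem edge_count_bounds {m e n : ℕ} (hn : 4 ≤ n) (he : 2 * (n - 2) ≤ 3 * e)
    (hk : 4 * (m + e) ≤ n ^ 2) :
    (m : ℚ) ≤
        ((n : ℚ) - 1) + (((n - 1) / 2 : ℕ) : ℚ) * (((n - 2) / 2 : ℕ) : ℚ)
          - 2 * ((n : ℚ) - 2) / 3 ∧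
      (Even n → m ≤ n * (n - 2) / 4) ∧
      (Odd n → m ≤ (n - 1) ^ 2 / 4) := by
  obtain ⟨i, rfl⟩ : ∃ i, n = i + 2 := ⟨n - 2, by omega⟩
  rw [show i + 2 - 1 = i + 1 by omega, Nat.add_sub_cancel] at *
  refine ⟨?_, ?_, ?_⟩
  · have hcore : 3 * m + 2 * i ≤ 3 * (i + 1) + 3 * ((i + 1) / 2 * (i / 2)) := by
      obtain ⟨l, rfl | rfl⟩ := Nat.even_or_odd' i
      · rw [show (2 * l + 1) / 2 = l by omega, show 2 * l / 2 = l by omega]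
        nlinarith
      · rw [show (2 * l + 1 + 1) / 2 = l + 1 by omega, show (2 * l + 1) / 2 = l by omega]
        nlinarith
    have : (3 * m + 2 * i : ℚ) ≤ 3 * (i + 1) + 3 * (((i + 1) / 2 : ℕ) * (i / 2 : ℕ)) := by
      exact_mod_cast hcore
    push_cast
    linarith
  · rintro ⟨j, hj⟩
    obtain ⟨l, rfl⟩ : ∃ l, i = 2 * l := ⟨j - 1, by omega⟩
    rw [show (2 * l + 2) * (2 * l) / 4 = l * l + l by
      rw [show (2 * l + 2) * (2 * l) = 4 * (l * l + l) by ring]; omega]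
    nlinarith
  · rintro ⟨j, hj⟩
    obtain ⟨l, rfl⟩ : ∃ l, i = 2 * l + 1 := ⟨j - 1, by omega⟩
    rw [show (2 * l + 1 + 1) ^ 2 / 4 = (l + 1) ^ 2 by
      rw [show (2 * l + 1 + 1) ^ 2 = 4 * (l + 1) ^ 2 by ring]; omega]
    nlinarith

namespace SimpleGraph

section NoIsolatedEdge

variable {V : Type*} [Fintype V] (H : SimpleGraph V) [DecidableRel H.Adj]

theorem sum_dart_inv_degree_fst [DecidableEq V] :
    ∑ d : H.Dart, (H.degree d.fst : ℚ)⁻¹ = #{v | 0 < H.degree v} := by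
  rw [← Finset.sum_fiberwise' univ (fun d : H.Dart => d.fst) (fun v => (H.degree v : ℚ)⁻¹),
    Finset.card_filter]
  push_cast
  refine Finset.sum_congr rfl fun v _ => ?_
  rw [Finset.sum_const, dart_fst_fiber_card_eq_degree, nsmul_eq_mul]
  rcases Nat.eq_zero_or_pos (H.degree v) with h | h
  · simp [h]
  · simp [h.ne']

/-- Each non-isolated vertex spreads a unit weight evenly over its darts; a dart and its reverse
carry at most `1/2 + 1` between them. -/
theorem two_mul_card_degree_pos_le (h : ∀ u v, H.Adj u v → H.degree u ≠ 1 ∨ H.degree v ≠ 1) :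
    2 * #{v | 0 < H.degree v} ≤ 3 * #H.edgeFinset := by
  classical
  have hsymm : ∑ d : H.Dart, (H.degree d.snd : ℚ)⁻¹ = ∑ d : H.Dart, (H.degree d.fst : ℚ)⁻¹ :=
    Fintype.sum_bijective Dart.symm Dart.symm_involutive.bijective _ _ fun _ => rfl
  have hdart (d : H.Dart) : (H.degree d.fst : ℚ)⁻¹ + (H.degree d.snd : ℚ)⁻¹ ≤ 3 / 2 :=
    inv_add_inv_le_three_halves ((H.degree_pos_iff_exists_adj _).2 ⟨_, d.adj⟩)
      ((H.degree_pos_iff_exists_adj _).2 ⟨_, d.adj.symm⟩) (h _ _ d.adj)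
  have : (2 * #{v | 0 < H.degree v} : ℚ) ≤ 3 * #H.edgeFinset := calc
    (2 * #{v | 0 < H.degree v} : ℚ)
        = ∑ d : H.Dart, ((H.degree d.fst : ℚ)⁻¹ + (H.degree d.snd : ℚ)⁻¹) := by
      rw [Finset.sum_add_distrib, hsymm, ← sum_dart_inv_degree_fst]; ring
    _ ≤ ∑ _d : H.Dart, (3 / 2 : ℚ) := Finset.sum_le_sum fun d _ => hdart d
    _ = 3 * #H.edgeFinset := by
      rw [Finset.sum_const, Finset.card_univ, dart_card_eq_twice_card_edges]; ring
  exact_mod_cast this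

end NoIsolatedEdge

variable {V : Type*} {G : SimpleGraph V} {c : V → Bool} {u v w x y z : V}

variable (G c) in
def crossComplement : SimpleGraph V := (⊤ : SimpleGraph Bool).comap c \ G

@[simp]
theorem crossComplement_adj : (G.crossComplement c).Adj u v ↔ c u ≠ c v ∧ ¬G.Adj u v := by
  simp [crossComplement]

theorem ncard_edgeSet_add_ncard_edgeSet_crossComplement [Finite V]
    (hbip : ∀ u v, G.Adj u v → c u ≠ c v) :
    G.edgeSet.ncard + (G.crossComplement c).edgeSet.ncard =
      ((⊤ : SimpleGraph Bool).comap c).edgeSet.ncard := by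
  have hle : G ≤ (⊤ : SimpleGraph Bool).comap c := fun u v h => by simpa using hbip u v h
  rw [crossComplement, edgeSet_sdiff, add_comm]
  exact Set.ncard_sdiff_add_ncard_of_subset (edgeSet_mono hle)

theorem four_mul_ncard_edgeSet_comap_top_le [Fintype V] (c : V → Bool) :
    4 * ((⊤ : SimpleGraph Bool).comap c).edgeSet.ncard ≤ Fintype.card V ^ 2 := by
  have hbip : ((⊤ : SimpleGraph Bool).comap c).IsBipartite := by
    simpa using (Coloring.mk (G := (⊤ : SimpleGraph Bool).comap c) c fun h => h).colorable
  have h := hbip.four_mul_encard_edgeSet_le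
  rw [← Set.Finite.cast_ncard_eq (Set.toFinite _), ENat.card_eq_coe_fintype_card] at h
  exact_mod_cast h

variable [DecidableEq V]

theorem isDomSet_pair_of_crossComplement (huz : c u ≠ c z)
    (hu : ∀ w, (G.crossComplement c).Adj u w → w = z)
    (hz : ∀ w, (G.crossComplement c).Adj z w → w = u) : IsDomSet G {u, z} := by
  intro w hw
  simp only [mem_insert, mem_singleton, not_or] at hw
  by_cases hwu : c u = c w
  · refine ⟨z, by simp, ?_⟩
    by_contra hG
    exact hw.1 (hz w (crossComplement_adj.2 ⟨hwu ▸ huz.symm, hG⟩))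
  · refine ⟨u, by simp, ?_⟩
    by_contra hG
    exact hw.2 (hu w (crossComplement_adj.2 ⟨hwu, hG⟩))

theorem not_crossComplement_adj_of_isDomSet (hbip : ∀ u v, G.Adj u v → c u ≠ c v)
    (hdom : IsDomSet G {x, y}) (hxy : G.Adj x y) (hside : c x ≠ c y) :
    ¬(G.crossComplement c).Adj x w := by
  rintro ⟨hxw, hGxw⟩
  have hwy : w ≠ y := by rintro rfl; exact hGxw hxy
  obtain ⟨u, hu, hGuw⟩ := hdom w (by simp [hwy, (ne_of_apply_ne c hxw).symm])
  rcases mem_insert.1 hu with rfl | hu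
  · exact hGxw hGuw
  · rw [mem_singleton.1 hu] at hGuw
    exact hbip y w hGuw (Bool.eq_of_ne_of_ne hside hxw)

theorem eq_or_eq_of_isUMDS_of_isDomSet (hD : IsUMDS G {x, y}) (hxy : x ≠ y)
    (hdom : IsDomSet G {u, z}) (huz : u ≠ z) : u = x ∨ u = y := by
  have h := hD.2.2 _ hdom (by rw [card_pair huz, card_pair hxy])
  simpa [h] using mem_insert_self u {z}

section UniqueDominatingEdge

variable (hbip : ∀ u v, G.Adj u v → c u ≠ c v) (hside : c x ≠ c y) (hxy : G.Adj x y)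
  (hD : IsUMDS G {x, y})
include hbip hside hxy hD

theorem ne_of_crossComplement_adj (huv : (G.crossComplement c).Adj u v) : u ≠ x ∧ u ≠ y := by
  constructor <;> rintro rfl
  · exact not_crossComplement_adj_of_isDomSet hbip hD.1 hxy hside huv
  · exact not_crossComplement_adj_of_isDomSet hbip (pair_comm u x ▸ hD.1) hxy.symm hside.symm huv

variable [Fintype V] [DecidableRel (G.crossComplement c).Adj]

theorem degree_crossComplement_pos_iff :
    0 < (G.crossComplement c).degree v ↔ v ≠ x ∧ v ≠ y := by
  rw [degree_pos_iff_exists_adj]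
  refine ⟨fun ⟨w, hw⟩ => ne_of_crossComplement_adj hbip hside hxy hD hw, fun hv => ?_⟩
  by_contra! hno
  obtain ⟨z, hz, hvz⟩ : ∃ z, (z = x ∨ z = y) ∧ c v ≠ c z := by
    by_cases h : c v = c x
    · exact ⟨y, Or.inr rfl, h ▸ hside⟩
    · exact ⟨x, Or.inl rfl, h⟩
  have hzno : ∀ w, ¬(G.crossComplement c).Adj z w := fun w hw => by
    have := ne_of_crossComplement_adj hbip hside hxy hD hw
    tauto
  have hdom := isDomSet_pair_of_crossComplement hvz (fun w hw => absurd hw (hno w))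
    (fun w hw => absurd hw (hzno w))
  have := eq_or_eq_of_isUMDS_of_isDomSet hD (ne_of_apply_ne c hside) hdom (ne_of_apply_ne c hvz)
  tauto

theorem card_degree_crossComplement_pos :
    #{v | 0 < (G.crossComplement c).degree v} = Fintype.card V - 2 := by
  have h : ({v | 0 < (G.crossComplement c).degree v} : Finset V) = univ \ {x, y} := by
    ext v
    simp [degree_crossComplement_pos_iff hbip hside hxy hD]
  rw [h, card_sdiff_of_subset (subset_univ _), card_univ, card_pair (ne_of_apply_ne c hside)]

theorem degree_crossComplement_ne_one (huv : (G.crossComplement c).Adj u v) :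
    (G.crossComplement c).degree u ≠ 1 ∨ (G.crossComplement c).degree v ≠ 1 := by
  by_contra! h
  obtain ⟨hu, hv⟩ := h
  rw [degree_eq_one_iff_existsUnique_adj] at hu hv
  have hcuv := (crossComplement_adj.1 huv).1
  have hdom := isDomSet_pair_of_crossComplement hcuv (fun w hw => hu.unique hw huv)
    (fun w hw => hv.unique hw huv.symm)
  have := eq_or_eq_of_isUMDS_of_isDomSet hD (ne_of_apply_ne c hside) hdom (ne_of_apply_ne c hcuv)
  have := ne_of_crossComplement_adj hbip hside hxy hD huv
  tauto

end UniqueDominatingEdge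

end SimpleGraph

open SimpleGraph in
theorem stmt10_general {V : Type*} [Fintype V] [DecidableEq V] (G : SimpleGraph V) (n : ℕ)
    (hn : Fintype.card V = n) (h6 : 6 ≤ n)
    (c : V → Bool) (hbip : ∀ u v : V, G.Adj u v → c u ≠ c v)
    (x y : V) (hside : c x ≠ c y) (hadj : G.Adj x y)
    (hD : IsUMDS G {x, y}) :
    (G.edgeSet.ncard : ℚ) ≤
        ((n : ℚ) - 1) + (((n - 1) / 2 : ℕ) : ℚ) * (((n - 2) / 2 : ℕ) : ℚ)
          - 2 * ((n : ℚ) - 2) / 3 ∧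
      (Even n → G.edgeSet.ncard ≤ n * (n - 2) / 4) ∧
      (Odd n → G.edgeSet.ncard ≤ (n - 1) ^ 2 / 4) := by
  classical
  have hmissing := (G.crossComplement c).two_mul_card_degree_pos_le
    fun u v => degree_crossComplement_ne_one hbip hside hadj hD
  rw [card_degree_crossComplement_pos hbip hside hadj hD, hn, ← Set.ncard_coe_finset,
    coe_edgeFinset] at hmissing
  have hcross := four_mul_ncard_edgeSet_comap_top_le (V := V) c
  rw [← ncard_edgeSet_add_ncard_edgeSet_crossComplement hbip, hn] at hcross
  exact edge_count_bounds (by omega) hmissing hcross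

theorem stmt10 {V : Type*} [Fintype V] [DecidableEq V] (G : SimpleGraph V) (n : ℕ)
    (hn : Fintype.card V = n) (h6 : 6 ≤ n)
    (hiso : ∀ v : V, ∃ u, G.Adj u v)
    (c : V → Bool) (hbip : ∀ u v : V, G.Adj u v → c u ≠ c v)
    (x y : V) (hside : c x ≠ c y) (hadj : G.Adj x y)
    (hD : IsUMDS G {x, y}) :
    (G.edgeSet.ncard : ℚ) ≤
        ((n : ℚ) - 1) + (((n - 1) / 2 : ℕ) : ℚ) * (((n - 2) / 2 : ℕ) : ℚ)
          - 2 * ((n : ℚ) - 2) / 3 ∧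
      (Even n → G.edgeSet.ncard ≤ n * (n - 2) / 4) ∧
      (Odd n → G.edgeSet.ncard ≤ (n - 1) ^ 2 / 4) :=
  stmt10_general G n hn h6 c hbip x y hside hadj hD
end

section
/- Let G be a bipartite graph of order n ≥ 6 without isolated vertices having a unique minimum dominating set of size 2. Then the number of edges of G is at most n(n−2)/4 if n is even, and at most (n−1)²/4 if n is odd. -/
/-!
Let `X, Y` be the colour classes and call `x ∈ X` a full row if it is adjacent to all of `Y`
(dually, full columns). A full row and a full column together dominate, so by uniqueness there
are no full rows, or no full columns, or exactly one of each. Every non-full row and every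
non-full column meets the set `M ⊆ X × Y` of non-adjacent pairs, and `|E| = |X||Y| - |M|`;
in each case this is at most `(n - 1)² / 4`. The only tight case is `|X| = |Y|` with
`|M| = |X| - 1`: then `M` is a perfect matching between the non-full rows and columns, and any
matched pair would be a second dominating pair.
-/

open Finset

theorem parity_bounds_of_four_mul_le_sq {e n : ℕ} (h : 4 * e ≤ (n - 1) ^ 2) :
    (Even n → e ≤ n * (n - 2) / 4) ∧ (Odd n → e ≤ (n - 1) ^ 2 / 4) := by
  refine ⟨fun hn => ?_, fun _ => by omega⟩
  obtain ⟨k, rfl⟩ := hn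
  rcases k with _ | k
  · simp_all
  · have h1 : (k + 1 + (k + 1) - 1) ^ 2 = 4 * (k * (k + 1)) + 1 := by
      rw [show k + 1 + (k + 1) - 1 = 2 * k + 1 by omega]; ring
    have h2 : (k + 1 + (k + 1)) * (k + 1 + (k + 1) - 2) = 4 * (k * (k + 1)) := by
      rw [show k + 1 + (k + 1) - 2 = 2 * k by omega]; ring
    omega

theorem four_mul_le_sq_of_add_eq_mul {s t m e : ℕ} (he : e + m = s * t)
    (hm : s ≤ m ∨ t ≤ m ∨ s ≠ t ∧ s ≤ m + 1 ∧ t ≤ m + 1) : 4 * e ≤ (s + t - 1) ^ 2 := by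
  rcases Nat.eq_zero_or_pos (s + t) with h0 | hpos
  · simp_all
  zify [hpos] at he ⊢
  rcases hm with hm | hm | ⟨hst, hs, ht⟩
  · nlinarith [sq_nonneg ((s : ℤ) - t + 1)]
  · nlinarith [sq_nonneg ((t : ℤ) - s + 1)]
  · rcases Nat.lt_or_gt_of_ne hst with hlt | hlt
    · have : (s : ℤ) + 1 ≤ t := by exact_mod_cast hlt
      nlinarith
    · have : (t : ℤ) + 1 ≤ s := by exact_mod_cast hlt
      nlinarith

theorem IsUMDS.pair_eq {V : Type*} [DecidableEq V] {G : SimpleGraph V} {D : Finset V}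
    (hD : IsUMDS G D) (hcard : #D = 2) {x y : V} (hxy : x ≠ y) (h : IsDomSet G {x, y}) :
    ({x, y} : Finset V) = D :=
  hD.2.2 _ h (by rw [card_pair hxy, hcard])

namespace SimpleGraph

variable {V : Type*} {G : SimpleGraph V}

theorem Colorable.exists_isBipartiteWith_compl [Fintype V] [DecidableEq V] (h : G.Colorable 2) :
    ∃ X : Finset V, G.IsBipartiteWith X ↑Xᶜ := by
  obtain ⟨c⟩ := h
  refine ⟨univ.filter (c · = 0), disjoint_coe.mpr disjoint_compl_right, fun v w hvw => ?_⟩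
  have := c.valid hvw
  simp only [coe_compl, coe_filter, mem_univ, true_and, Set.mem_compl_iff, Set.mem_ofPred_eq]
  omega

variable [Fintype V] [DecidableEq V] [DecidableRel G.Adj] {X : Finset V}

variable (G X) in
def nonAdjPairs : Finset (V × V) :=
  (X ×ˢ Xᶜ).filter fun p => ¬ G.Adj p.1 p.2

theorem IsBipartiteWith.card_edgeFinset_add_card_nonAdjPairs (hX : G.IsBipartiteWith X ↑Xᶜ) :
    #G.edgeFinset + #(G.nonAdjPairs X) = #X * #Xᶜ := by
  rw [← isBipartiteWith_sum_degrees_eq_card_edges hX, ← card_product,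
    ← card_filter_add_card_filter_not (s := X ×ˢ Xᶜ) (fun p => G.Adj p.1 p.2), nonAdjPairs]
  congr 1
  rw [card_filter, sum_product]
  refine sum_congr rfl fun x hx => ?_
  rw [← card_neighborFinset_eq_degree, isBipartiteWith_neighborFinset hX (by simpa using hx),
    card_filter]

theorem isDomSet_pair_of_notMem_nonAdjPairs {x y : V} (hx : x ∈ X) (hy : y ∉ X)
    (hrow : ∀ v ∉ X, v ≠ y → (x, v) ∉ G.nonAdjPairs X)
    (hcol : ∀ v ∈ X, v ≠ x → (v, y) ∉ G.nonAdjPairs X) : IsDomSet G {x, y} := by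
  intro v hv
  simp only [mem_insert, mem_singleton, not_or] at hv
  by_cases hvX : v ∈ X
  · refine ⟨y, by simp, (?_ : G.Adj v y).symm⟩
    simpa [nonAdjPairs, hvX, hy] using hcol v hvX hv.1
  · refine ⟨x, by simp, ?_⟩
    simpa [nonAdjPairs, hvX, hx] using hrow v hvX hv.2

theorem isDomSet_pair_of_injOn_nonAdjPairs
    (hfst : Set.InjOn Prod.fst (G.nonAdjPairs X : Set (V × V)))
    (hsnd : Set.InjOn Prod.snd (G.nonAdjPairs X : Set (V × V)))
    {p : V × V} (hp : p ∈ G.nonAdjPairs X) : IsDomSet G {p.1, p.2} := by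
  have hpX : p.1 ∈ X ∧ p.2 ∉ X := by simpa [nonAdjPairs] using (mem_filter.mp hp).1
  refine isDomSet_pair_of_notMem_nonAdjPairs hpX.1 hpX.2 (fun v _ hv hq => hv ?_)
    (fun v _ hv hq => hv ?_)
  · exact congrArg Prod.snd (hfst hq hp rfl)
  · exact congrArg Prod.fst (hsnd hq hp rfl)

theorem image_fst_nonAdjPairs_subset : (G.nonAdjPairs X).image Prod.fst ⊆ X := by
  simp +contextual [subset_iff, nonAdjPairs]

theorem image_snd_nonAdjPairs_subset : (G.nonAdjPairs X).image Prod.snd ⊆ Xᶜ := by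
  simp +contextual [subset_iff, nonAdjPairs]

variable {D : Finset V}

theorem _root_.IsUMDS.pair_eq_of_notMem_image_nonAdjPairs (hD : IsUMDS G D) (hcard : #D = 2)
    {x y : V} (hx : x ∈ X) (hx' : x ∉ (G.nonAdjPairs X).image Prod.fst)
    (hy : y ∉ X) (hy' : y ∉ (G.nonAdjPairs X).image Prod.snd) : ({x, y} : Finset V) = D :=
  hD.pair_eq hcard (hx.ne_of_notMem hy) <| isDomSet_pair_of_notMem_nonAdjPairs hx hy
    (fun _ _ _ hv => hx' (mem_image_of_mem _ hv)) (fun _ _ _ hv => hy' (mem_image_of_mem _ hv))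

theorem _root_.IsUMDS.card_le_card_image_fst_nonAdjPairs_add_one (hD : IsUMDS G D)
    (hcard : #D = 2) {y : V} (hy : y ∉ X) (hy' : y ∉ (G.nonAdjPairs X).image Prod.snd) :
    #X ≤ #((G.nonAdjPairs X).image Prod.fst) + 1 := by
  have hfull : #(X \ (G.nonAdjPairs X).image Prod.fst) ≤ 1 := by
    refine card_le_one.mpr fun x hx x' hx' => ?_
    rw [mem_sdiff] at hx hx'
    refine (insert_inj (notMem_singleton.mpr (hx.1.ne_of_notMem hy))).mp ?_
    exact (hD.pair_eq_of_notMem_image_nonAdjPairs hcard hx.1 hx.2 hy hy').trans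
      (hD.pair_eq_of_notMem_image_nonAdjPairs hcard hx'.1 hx'.2 hy hy').symm
  have := card_le_card_sdiff_add_card (s := X) (t := (G.nonAdjPairs X).image Prod.fst)
  omega

theorem _root_.IsUMDS.card_compl_le_card_image_snd_nonAdjPairs_add_one (hD : IsUMDS G D)
    (hcard : #D = 2) {x : V} (hx : x ∈ X) (hx' : x ∉ (G.nonAdjPairs X).image Prod.fst) :
    #Xᶜ ≤ #((G.nonAdjPairs X).image Prod.snd) + 1 := by
  have hfull : #(Xᶜ \ (G.nonAdjPairs X).image Prod.snd) ≤ 1 := by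
    refine card_le_one.mpr fun y hy y' hy' => ?_
    rw [mem_sdiff, mem_compl] at hy hy'
    refine (insert_inj (notMem_singleton.mpr (hx.ne_of_notMem hy.1).symm)).mp ?_
    rw [pair_comm y, pair_comm y']
    exact (hD.pair_eq_of_notMem_image_nonAdjPairs hcard hx hx' hy.1 hy.2).trans
      (hD.pair_eq_of_notMem_image_nonAdjPairs hcard hx hx' hy'.1 hy'.2).symm
  have := card_le_card_sdiff_add_card (s := Xᶜ) (t := (G.nonAdjPairs X).image Prod.snd)
  omega

theorem _root_.IsUMDS.card_le_card_nonAdjPairs_of_card_eq (hD : IsUMDS G D) (hcard : #D = 2)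
    {x₀ y₀ : V} (hx₀ : x₀ ∈ X) (hx₀' : x₀ ∉ (G.nonAdjPairs X).image Prod.fst)
    (hy₀ : y₀ ∉ X) (hy₀' : y₀ ∉ (G.nonAdjPairs X).image Prod.snd)
    (hXc : #X = #Xᶜ) (h2 : 2 ≤ #X) : #X ≤ #(G.nonAdjPairs X) := by
  by_contra! hlt
  have hrows := hD.card_le_card_image_fst_nonAdjPairs_add_one hcard hy₀ hy₀'
  have hcols := hD.card_compl_le_card_image_snd_nonAdjPairs_add_one hcard hx₀ hx₀'
  have hfst : Set.InjOn Prod.fst (G.nonAdjPairs X : Set (V × V)) :=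
    card_image_iff.mp (le_antisymm card_image_le (by omega))
  have hsnd : Set.InjOn Prod.snd (G.nonAdjPairs X : Set (V × V)) :=
    card_image_iff.mp (le_antisymm card_image_le (by omega))
  obtain ⟨p, hp⟩ : (G.nonAdjPairs X).Nonempty := by
    rw [← card_pos]; have := card_image_le (s := G.nonAdjPairs X) (f := Prod.fst); omega
  have hp₁ : p.1 ∈ X := image_fst_nonAdjPairs_subset (mem_image_of_mem _ hp)
  have hp₂ : p.2 ∉ X := mem_compl.mp (image_snd_nonAdjPairs_subset (mem_image_of_mem _ hp))
  -- the non-adjacent pairs form a perfect matching, so each of them dominates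
  have hpD : ({p.1, p.2} : Finset V) = {x₀, y₀} :=
    (hD.pair_eq hcard (hp₁.ne_of_notMem hp₂)
      (isDomSet_pair_of_injOn_nonAdjPairs hfst hsnd hp)).trans
        (hD.pair_eq_of_notMem_image_nonAdjPairs hcard hx₀ hx₀' hy₀ hy₀').symm
  have : p.1 ∈ ({x₀, y₀} : Finset V) := hpD ▸ mem_insert_self _ _
  rcases mem_insert.mp this with h | h
  · exact hx₀' (h ▸ mem_image_of_mem _ hp)
  · exact hy₀ (mem_singleton.mp h ▸ hp₁)

theorem _root_.IsUMDS.card_nonAdjPairs_lower_bound (hD : IsUMDS G D) (hcard : #D = 2)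
    (hV : 4 ≤ Fintype.card V) :
    #X ≤ #(G.nonAdjPairs X) ∨ #Xᶜ ≤ #(G.nonAdjPairs X) ∨
      #X ≠ #Xᶜ ∧ #X ≤ #(G.nonAdjPairs X) + 1 ∧ #Xᶜ ≤ #(G.nonAdjPairs X) + 1 := by
  have hrows : #((G.nonAdjPairs X).image Prod.fst) ≤ #(G.nonAdjPairs X) := card_image_le
  have hcols : #((G.nonAdjPairs X).image Prod.snd) ≤ #(G.nonAdjPairs X) := card_image_le
  by_cases hX : X ⊆ (G.nonAdjPairs X).image Prod.fst
  · exact .inl ((card_le_card hX).trans hrows)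
  by_cases hXc : Xᶜ ⊆ (G.nonAdjPairs X).image Prod.snd
  · exact .inr (.inl ((card_le_card hXc).trans hcols))
  obtain ⟨x₀, hx₀, hx₀'⟩ := not_subset.mp hX
  obtain ⟨y₀, hy₀, hy₀'⟩ := not_subset.mp hXc
  have hXle := hD.card_le_card_image_fst_nonAdjPairs_add_one hcard (mem_compl.mp hy₀) hy₀'
  have hXcle := hD.card_compl_le_card_image_snd_nonAdjPairs_add_one hcard hx₀ hx₀'
  by_cases heq : #X = #Xᶜ
  · have hV' := card_add_card_compl X
    exact .inl (hD.card_le_card_nonAdjPairs_of_card_eq hcard hx₀ hx₀' (mem_compl.mp hy₀) hy₀'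
      heq (by omega))
  · exact .inr (.inr ⟨heq, by omega, by omega⟩)

end SimpleGraph

theorem stmt11_general {V : Type*} [Fintype V] (G : SimpleGraph V) (n : ℕ)
    (hn : Fintype.card V = n) (h6 : 6 ≤ n)
    (hbip : G.Colorable 2)
    (D : Finset V) (hD : IsUMDS G D) (hcard : D.card = 2) :
    (Even n → G.edgeSet.ncard ≤ n * (n - 2) / 4) ∧
    (Odd n → G.edgeSet.ncard ≤ (n - 1) ^ 2 / 4) := by
  classical
  obtain ⟨X, hX⟩ := hbip.exists_isBipartiteWith_compl
  have hsplit : #X + #Xᶜ = n := hn ▸ card_add_card_compl X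
  have hedges : 4 * #G.edgeFinset ≤ (n - 1) ^ 2 :=
    hsplit ▸ four_mul_le_sq_of_add_eq_mul hX.card_edgeFinset_add_card_nonAdjPairs
      (hD.card_nonAdjPairs_lower_bound hcard (by omega))
  rw [← SimpleGraph.coe_edgeFinset, Set.ncard_coe_finset]
  exact parity_bounds_of_four_mul_le_sq hedges

theorem stmt11 {V : Type*} [Fintype V] (G : SimpleGraph V) (n : ℕ)
    (hn : Fintype.card V = n) (h6 : 6 ≤ n)
    (hbip : G.Colorable 2)
    (hiso : ∀ v : V, ∃ u, G.Adj u v)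
    (D : Finset V) (hD : IsUMDS G D) (hcard : D.card = 2) :
    (Even n → G.edgeSet.ncard ≤ n * (n - 2) / 4) ∧
    (Odd n → G.edgeSet.ncard ≤ (n - 1) ^ 2 / 4) :=
  stmt11_general G n hn h6 hbip D hD hcard
end

section
/- For every n ≥ 6 even there exists a bipartite graph G on n vertices without isolated vertices with domination number 2, a unique minimum dominating set, and exactly n(n−2)/4 edges; for n ≥ 7 odd such a graph exists with exactly (n−1)²/4 edges. -/
/-!
Split the vertices into sides `α` and `β` of sizes `⌈n/2⌉` and `⌊n/2⌋`, fix `a ≠ c` in `α` and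
`b` in `β`, and join `x ∈ α` to `y ∈ β` unless `x = f y`, where `f b = a` and `f y = c` for
`y ≠ b`. Every `y` misses exactly one vertex, so there are `(|α| - 1) |β|` edges, and `{a, b}`
dominates. A dominating pair must meet the closed neighbourhoods `{c, b}` of `c` and
`{a} ∪ (β \ {b})` of `a`. If it met the latter in some `y ≠ b`, any other vertex of
`β \ {b}` would be undominated; and `{a, c}` leaves a third vertex of `α` undominated.
So the pair is `{a, b}`.
-/

lemma exists_ne_ne_of_two_lt_card {γ : Type*} [Finite γ] (h : 2 < Nat.card γ) (x y : γ) :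
    ∃ z, z ≠ x ∧ z ≠ y := by
  by_contra! hxy
  have hsub : (Set.univ : Set γ) ⊆ {x, y} := fun z _ => by
    by_cases hz : z = x
    · exact .inl hz
    · exact .inr (hxy z hz)
  have := (Set.ncard_le_ncard hsub).trans (Set.ncard_insert_le x {y})
  rw [Set.ncard_univ, Set.ncard_singleton] at this
  omega

lemma Nat.sub_half_sub_one_mul_half_of_even {n : ℕ} (hn : Even n) :
    (n - n / 2 - 1) * (n / 2) = n * (n - 2) / 4 := by
  obtain ⟨m, rfl⟩ := hn
  rw [show m + m - (m + m) / 2 - 1 = m - 1 by omega, show (m + m) / 2 = m by omega,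
    show m + m - 2 = 2 * (m - 1) by omega, show m + m = 2 * m by omega]
  ring_nf; omega

lemma Nat.sub_half_sub_one_mul_half_of_odd {n : ℕ} (hn : Odd n) :
    (n - n / 2 - 1) * (n / 2) = (n - 1) ^ 2 / 4 := by
  obtain ⟨m, rfl⟩ := hn
  rw [show 2 * m + 1 - (2 * m + 1) / 2 - 1 = m by omega, show (2 * m + 1) / 2 = m by omega,
    Nat.add_sub_cancel, mul_pow, sq m]
  norm_num

section Domination

variable {V W : Type*} {G : SimpleGraph V} {H : SimpleGraph W} {D : Finset V}

lemma IsDomSet.exists_mem_eq_or_adj (hD : IsDomSet G D) (v : V) :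
    ∃ u ∈ D, u = v ∨ G.Adj u v := by
  by_cases hv : v ∈ D
  · exact ⟨v, hv, .inl rfl⟩
  · obtain ⟨u, hu, huv⟩ := hD v hv
    exact ⟨u, hu, .inr huv⟩

lemma IsDomSet.map_iso (hD : IsDomSet G D) (f : G ≃g H) :
    IsDomSet H (D.map f.toEquiv.toEmbedding) := by
  intro w hw
  have hw' : f.symm w ∉ D := fun h => hw (Finset.mem_map.2 ⟨_, h, f.apply_symm_apply w⟩)
  obtain ⟨u, hu, huw⟩ := hD _ hw'
  exact ⟨f u, Finset.mem_map_of_mem _ hu, by simpa using f.map_adj_iff.2 huw⟩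

lemma isUMDS_of_forall_isDomSet (hD : IsDomSet G D)
    (h : ∀ D', IsDomSet G D' → D'.card ≤ D.card → D' = D) : IsUMDS G D := by
  refine ⟨hD, fun D' hD' => ?_, fun D' hD' hcard => h D' hD' hcard.le⟩
  by_contra! hlt
  exact hlt.ne (congrArg Finset.card (h D' hD' hlt.le))

lemma IsUMDS.map_iso (hD : IsUMDS G D) (f : G ≃g H) :
    IsUMDS H (D.map f.toEquiv.toEmbedding) := by
  refine isUMDS_of_forall_isDomSet (hD.1.map_iso f) fun D' hD' hcard => ?_
  have hback : D'.map f.symm.toEquiv.toEmbedding = D := by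
    refine hD.2.2 _ (hD'.map_iso f.symm) ?_
    simpa using hcard.antisymm (by simpa using hD.2.1 _ (hD'.map_iso f.symm))
  rw [← hback, Finset.map_map]
  simp

end Domination

namespace SimpleGraph

lemma Iso.ncard_edgeSet_eq {V W : Type*} {G : SimpleGraph V} {H : SimpleGraph W} (f : G ≃g H) :
    G.edgeSet.ncard = H.edgeSet.ncard := by
  rw [← Nat.card_coe_set_eq, ← Nat.card_coe_set_eq, Nat.card_congr f.mapEdgeSet]

variable {α β : Type*}

def bipartiteAvoid (f : β → α) : SimpleGraph (α ⊕ β) where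
  Adj
    | .inl x, .inr y => x ≠ f y
    | .inr y, .inl x => x ≠ f y
    | _, _ => False
  symm := ⟨by rintro (x | y) (x' | y') h <;> exact h⟩
  loopless := ⟨by rintro (x | y) h <;> exact h⟩

variable {f : β → α}

@[simp] lemma bipartiteAvoid_adj_inl_inr {x : α} {y : β} :
    (bipartiteAvoid f).Adj (.inl x) (.inr y) ↔ x ≠ f y := .rfl

@[simp] lemma bipartiteAvoid_adj_inr_inl {x : α} {y : β} :
    (bipartiteAvoid f).Adj (.inr y) (.inl x) ↔ x ≠ f y := .rfl

@[simp] lemma not_bipartiteAvoid_adj_inl_inl {x x' : α} :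
    ¬(bipartiteAvoid f).Adj (.inl x) (.inl x') := id

@[simp] lemma not_bipartiteAvoid_adj_inr_inr {y y' : β} :
    ¬(bipartiteAvoid f).Adj (.inr y) (.inr y') := id

lemma bipartiteAvoid_le_completeBipartiteGraph :
    bipartiteAvoid f ≤ completeBipartiteGraph α β := by
  rintro (x | y) (x' | y') h <;> simp_all

lemma bipartiteAvoid_colorable_two : (bipartiteAvoid f).Colorable 2 :=
  (CompleteBipartiteGraph.bicoloring α β).colorable.mono_left
    bipartiteAvoid_le_completeBipartiteGraph

lemma edgeSet_bipartiteAvoid :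
    (bipartiteAvoid f).edgeSet =
      (fun p : α × β => s(.inl p.1, .inr p.2)) '' {p | p.1 ≠ f p.2} := by
  refine Set.ext <| Sym2.ind fun u v => ?_
  rcases u with x | y <;> rcases v with x' | y' <;> simp [eq_comm]

lemma ncard_edgeSet_bipartiteAvoid [Finite α] [Finite β] :
    (bipartiteAvoid f).edgeSet.ncard = (Nat.card α - 1) * Nat.card β := by
  have hinj : Function.Injective fun p : α × β => (s(.inl p.1, .inr p.2) : Sym2 (α ⊕ β)) := by
    rintro ⟨x, y⟩ ⟨x', y'⟩ h
    simpa using h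
  have hcompl : {p : α × β | p.1 ≠ f p.2}ᶜ = Set.range fun y => (f y, y) := by
    ext ⟨x, y⟩
    simp [eq_comm]
  have hsum := Set.ncard_add_ncard_compl {p : α × β | p.1 ≠ f p.2}
  rw [hcompl, Set.ncard_range_of_injective (fun y y' h => (Prod.ext_iff.1 h).2),
    Nat.card_prod] at hsum
  rw [edgeSet_bipartiteAvoid, Set.ncard_image_of_injective _ hinj, Nat.sub_one_mul]
  omega

lemma exists_adj_bipartiteAvoid [Nontrivial α] (hf : ∀ x, ∃ y, f y ≠ x) (v : α ⊕ β) :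
    ∃ u, (bipartiteAvoid f).Adj u v := by
  rcases v with x | y
  · obtain ⟨y, hy⟩ := hf x
    exact ⟨.inr y, hy.symm⟩
  · obtain ⟨x, hx⟩ := exists_ne (f y)
    exact ⟨.inl x, hx⟩

section UniqueDominatingPair

variable [DecidableEq α] [DecidableEq β] {a c : α} {b : β} {D : Finset (α ⊕ β)}

lemma exists_update_ne [Nontrivial β] (hac : a ≠ c) (x : α) :
    ∃ y, Function.update (fun _ => c) b a y ≠ x := by
  by_cases hx : x = a
  · obtain ⟨y, hy⟩ := exists_ne b
    exact ⟨y, by simp [hy, hx, hac.symm]⟩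
  · exact ⟨b, by simp [Ne.symm hx]⟩

lemma isDomSet_bipartiteAvoid_update (hac : a ≠ c) :
    IsDomSet (bipartiteAvoid (Function.update (fun _ => c) b a))
      ({.inl a, .inr b} : Finset (α ⊕ β)) := by
  rintro (x | y) hv
  · exact ⟨.inr b, by simp, by simp_all⟩
  · exact ⟨.inl a, by simp, by simp_all⟩

lemma eq_of_isDomSet_bipartiteAvoid_update [Finite α] [Finite β] (hac : a ≠ c)
    (hα : 2 < Nat.card α) (hβ : 2 < Nat.card β)
    (hD : IsDomSet (bipartiteAvoid (Function.update (fun _ => c) b a)) D) (hcard : D.card ≤ 2) :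
    D = {.inl a, .inr b} := by
  obtain ⟨u, huD, hu⟩ := hD.exists_mem_eq_or_adj (.inl c)
  replace hu : u = .inl c ∨ u = .inr b := by
    rcases u with x | y <;> simp_all [Function.update_apply]
  obtain ⟨w, hwD, hw⟩ := hD.exists_mem_eq_or_adj (.inl a)
  replace hw : w = .inl a ∨ ∃ y ≠ b, w = .inr y := by
    rcases w with x | y <;> simp_all [Function.update_apply]
  have huw : u ≠ w := by
    rcases hu with rfl | rfl <;> rcases hw with rfl | ⟨y, hyb, rfl⟩ <;> simp_all [eq_comm]
  obtain rfl : D = {u, w} :=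
    (Finset.eq_of_subset_of_card_le (by simp [Finset.insert_subset_iff, huD, hwD])
      (by rwa [Finset.card_pair huw])).symm
  rcases hw with rfl | ⟨y, hyb, rfl⟩
  · rcases hu with rfl | rfl
    · obtain ⟨d, hda, hdc⟩ := exists_ne_ne_of_two_lt_card hα a c
      obtain ⟨v, hv, hvd⟩ := hD.exists_mem_eq_or_adj (.inl d)
      simp only [Finset.mem_insert, Finset.mem_singleton] at hv
      rcases hv with rfl | rfl <;> simp_all
    · exact Finset.pair_comm _ _
  · obtain ⟨r, hrb, hry⟩ := exists_ne_ne_of_two_lt_card hβ b y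
    obtain ⟨v, hv, hvr⟩ := hD.exists_mem_eq_or_adj (.inr r)
    simp only [Finset.mem_insert, Finset.mem_singleton] at hv
    rcases hu with rfl | rfl <;> rcases hv with rfl | rfl <;> simp_all

lemma isUMDS_bipartiteAvoid_update [Finite α] [Finite β] (hac : a ≠ c)
    (hα : 2 < Nat.card α) (hβ : 2 < Nat.card β) :
    IsUMDS (bipartiteAvoid (Function.update (fun _ => c) b a)) {.inl a, .inr b} :=
  isUMDS_of_forall_isDomSet (isDomSet_bipartiteAvoid_update hac) fun _ hD hcard =>
    eq_of_isDomSet_bipartiteAvoid_update hac hα hβ hD (hcard.trans Finset.card_le_two)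

end UniqueDominatingPair

end SimpleGraph

theorem stmt12 (n : ℕ) (h6 : 6 ≤ n) :
    ∃ (G : SimpleGraph (Fin n)) (D : Finset (Fin n)),
      G.Colorable 2 ∧
      (∀ v, ∃ u, G.Adj u v) ∧
      IsUMDS G D ∧ D.card = 2 ∧
      (Even n → G.edgeSet.ncard = n * (n - 2) / 4) ∧
      (Odd n → G.edgeSet.ncard = (n - 1) ^ 2 / 4) := by
  have hcard : Fintype.card (Fin (n - n / 2) ⊕ Fin (n / 2)) = n := by simp; omega
  have : Nontrivial (Fin (n - n / 2)) := Fin.nontrivial_iff_two_le.2 (by omega)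
  have : Nontrivial (Fin (n / 2)) := Fin.nontrivial_iff_two_le.2 (by omega)
  let a : Fin (n - n / 2) := ⟨0, by omega⟩
  let c : Fin (n - n / 2) := ⟨1, by omega⟩
  let b : Fin (n / 2) := ⟨0, by omega⟩
  have hac : a ≠ c := by simp [a, c, Fin.ext_iff]
  let B := SimpleGraph.bipartiteAvoid (Function.update (fun _ => c) b a)
  let e := B.overFinIso hcard
  have hedges : (B.overFin hcard).edgeSet.ncard = (n - n / 2 - 1) * (n / 2) := by
    rw [← e.ncard_edgeSet_eq, SimpleGraph.ncard_edgeSet_bipartiteAvoid, Nat.card_fin,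
      Nat.card_fin]
  refine ⟨B.overFin hcard, Finset.map e.toEquiv.toEmbedding {.inl a, .inr b},
    SimpleGraph.bipartiteAvoid_colorable_two.of_hom e.symm.toHom, fun v => ?_,
    (SimpleGraph.isUMDS_bipartiteAvoid_update hac (by simp; omega) (by simp; omega)).map_iso e,
    by simp, fun hn => hedges.trans (Nat.sub_half_sub_one_mul_half_of_even hn),
    fun hn => hedges.trans (Nat.sub_half_sub_one_mul_half_of_odd hn)⟩
  obtain ⟨u, hu⟩ := SimpleGraph.exists_adj_bipartiteAvoid (SimpleGraph.exists_update_ne hac)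
    (e.symm v)
  exact ⟨e u, by simpa using e.map_adj_iff.2 hu⟩
end

section
/- For every γ ≥ 2, there exists a bipartite graph G on n = 3γ vertices without isolated vertices, with domination number γ, a unique minimum dominating set, and exactly 2γ + 2⌈γ/2⌉⌊γ/2⌋ edges. -/
open Finset SimpleGraph

section Iso

variable {V W : Type*} {G : SimpleGraph V} {H : SimpleGraph W}

theorem IsDomSet.map (e : G ≃g H) {D : Finset V} (hD : IsDomSet G D) :
    IsDomSet H (D.map e.toEquiv.toEmbedding) := by
  intro w hw
  obtain ⟨u, hu, hadj⟩ := hD (e.symm w) fun h => hw (mem_map.2 ⟨_, h, e.apply_symm_apply w⟩)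
  exact ⟨e u, mem_map_of_mem _ hu, by simpa using e.map_adj_iff.2 hadj⟩

theorem IsUMDS.map (e : G ≃g H) {D : Finset V} (hD : IsUMDS G D) :
    IsUMDS H (D.map e.toEquiv.toEmbedding) := by
  refine ⟨hD.1.map e, fun D' h => ?_, fun D' h hcard => ?_⟩
  · simpa using hD.2.1 _ (h.map e.symm)
  · have := hD.2.2 _ (h.map e.symm) (by simpa using hcard)
    simp [← this, Finset.map_map]

end Iso

namespace P3Join

variable (ι κ : Type*)

/-- The path indexed by `x : ι ⊕ κ` has centre `(x, 0)` and leaves `(x, 1)`, `(x, 2)`; the paths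
`inl i` are those centred in `D_X`, and their leaf `(inl i, 1)` is joined to every leaf of every
path `inr j`. -/
def graph : SimpleGraph ((ι ⊕ κ) × Fin 3) :=
  SimpleGraph.fromRel fun u v =>
    (u.1 = v.1 ∧ u.2 = 0 ∧ v.2 ≠ 0) ∨ (u.1.isLeft ∧ u.2 = 1 ∧ v.1.isRight ∧ v.2 ≠ 0)

variable {ι κ}

theorem adj_center_iff {u : (ι ⊕ κ) × Fin 3} {x : ι ⊕ κ} :
    (graph ι κ).Adj u (x, 0) ↔ u.1 = x ∧ u.2 ≠ 0 := by
  rcases u with ⟨i | j, k⟩ <;> rcases x with i' | j' <;> fin_cases k <;> simp [graph] <;>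
    exact eq_comm

theorem adj_inl_one_iff {u : (ι ⊕ κ) × Fin 3} {i : ι} :
    (graph ι κ).Adj u (.inl i, 1) ↔ u = (.inl i, 0) ∨ u.1.isRight ∧ u.2 ≠ 0 := by
  rcases u with ⟨i' | j, k⟩ <;> fin_cases k <;> simp [graph]

theorem adj_inl_two_iff {u : (ι ⊕ κ) × Fin 3} {i : ι} :
    (graph ι κ).Adj u (.inl i, 2) ↔ u = (.inl i, 0) := by
  rcases u with ⟨i' | j, k⟩ <;> fin_cases k <;> simp [graph]

theorem adj_inr_iff {u : (ι ⊕ κ) × Fin 3} {j : κ} {k : Fin 3} (hk : k ≠ 0) :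
    (graph ι κ).Adj u (.inr j, k) ↔ u = (.inr j, 0) ∨ u.1.isLeft ∧ u.2 = 1 := by
  rcases u with ⟨i | j', k'⟩ <;> fin_cases k <;> fin_cases k' <;> simp [graph] at hk ⊢

theorem exists_adj (v : (ι ⊕ κ) × Fin 3) : ∃ u, (graph ι κ).Adj u v := by
  obtain ⟨x, k⟩ := v
  by_cases hk : k = 0
  · subst hk
    exact ⟨(x, 1), adj_center_iff.2 ⟨rfl, one_ne_zero⟩⟩
  · exact ⟨(x, 0), (adj_center_iff (u := (x, k)).2 ⟨rfl, hk⟩).symm⟩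

theorem colorable_two : (graph ι κ).Colorable 2 :=
  Coloring.colorable (α := Bool) <| Coloring.mk (fun v => xor v.1.isLeft (v.2 = 0)) <| by
    rintro ⟨i | j, k⟩ ⟨i' | j', k'⟩ h <;> fin_cases k <;> fin_cases k' <;> simp_all [graph]

variable {D : Finset ((ι ⊕ κ) × Fin 3)}

theorem exists_mem_column (hD : IsDomSet (graph ι κ) D) (x : ι ⊕ κ) : ∃ k, (x, k) ∈ D := by
  rcases x with i | j
  · by_cases h : (.inl i, 2) ∈ D
    · exact ⟨2, h⟩
    · obtain ⟨u, hu, hadj⟩ := hD _ h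
      exact ⟨0, adj_inl_two_iff.1 hadj ▸ hu⟩
  · by_cases h : (.inr j, 0) ∈ D
    · exact ⟨0, h⟩
    · obtain ⟨u, hu, hadj⟩ := hD _ h
      exact ⟨u.2, (adj_center_iff.1 hadj).1 ▸ hu⟩

section
variable (hD : IsDomSet (graph ι κ) D) (hcol : Set.InjOn Prod.fst (D : Set ((ι ⊕ κ) × Fin 3)))
include hD hcol

theorem inl_one_notMem (i : ι) : (.inl i, 1) ∉ D := by
  intro h1
  have h2 : (.inl i, 2) ∉ D := fun h2 => by simpa using hcol h1 h2 rfl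
  obtain ⟨u, hu, hadj⟩ := hD _ h2
  rw [adj_inl_two_iff] at hadj
  subst hadj
  simpa using hcol h1 hu rfl

theorem inr_notMem {j : κ} {k : Fin 3} (hk : k ≠ 0) : (.inr j, k) ∉ D := by
  intro hjk
  obtain ⟨k', hk'0, hk'k⟩ : ∃ k', k' ≠ 0 ∧ k' ≠ k := ⟨-k, by revert hk; fin_cases k <;> decide⟩
  have hjk' : (.inr j, k') ∉ D := fun h => hk'k (by simpa using hcol h hjk rfl)
  obtain ⟨⟨y, l⟩, hu, hadj⟩ := hD _ hjk'
  rcases (adj_inr_iff hk'0).1 hadj with h | ⟨hy, rfl⟩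
  · cases h
    exact hk (by simpa using hcol hjk hu rfl)
  · rcases y with i | _
    · exact inl_one_notMem hD hcol i hu
    · simp at hy

theorem center_mem (x : ι ⊕ κ) : (x, 0) ∈ D := by
  rcases x with i | j
  · obtain ⟨⟨y, l⟩, hu, hadj⟩ := hD _ (inl_one_notMem hD hcol i)
    rcases adj_inl_one_iff.1 hadj with h | ⟨hy, hl⟩
    · exact h ▸ hu
    · rcases y with _ | j
      · simp at hy
      · exact absurd hu (inr_notMem hD hcol hl)
  · obtain ⟨k, hk⟩ := exists_mem_column hD (.inr j)
    by_cases h : k = 0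
    · exact h ▸ hk
    · exact absurd hk (inr_notMem hD hcol h)

end

variable [Fintype ι] [Fintype κ]

variable (ι κ) in
def centers : Finset ((ι ⊕ κ) × Fin 3) := univ ×ˢ {0}

theorem card_centers : (centers ι κ).card = Fintype.card (ι ⊕ κ) := by
  simp [centers]

theorem isDomSet_centers : IsDomSet (graph ι κ) (centers ι κ) := by
  rintro ⟨x, k⟩ hv
  have hk : k ≠ 0 := by simpa [centers, eq_comm] using hv
  exact ⟨(x, 0), by simp [centers], (adj_center_iff (u := (x, k)).2 ⟨rfl, hk⟩).symm⟩

theorem injOn_fst_of_card_le (hD : IsDomSet (graph ι κ) D)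
    (hcard : D.card ≤ Fintype.card (ι ⊕ κ)) : Set.InjOn Prod.fst (D : Set ((ι ⊕ κ) × Fin 3)) := by
  classical
  have himage : D.image Prod.fst = univ := eq_univ_of_forall fun x =>
    let ⟨_, hk⟩ := exists_mem_column hD x
    mem_image.2 ⟨_, hk, rfl⟩
  refine card_image_iff.1 (le_antisymm card_image_le ?_)
  rwa [himage, card_univ]

theorem eq_centers_of_card_le (hD : IsDomSet (graph ι κ) D)
    (hcard : D.card ≤ Fintype.card (ι ⊕ κ)) : D = centers ι κ := by
  have hcol := injOn_fst_of_card_le hD hcard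
  refine (eq_of_subset_of_card_le (fun v hv => ?_) (by rwa [card_centers])).symm
  obtain ⟨x, k⟩ := v
  obtain rfl : k = 0 := by simpa [centers, eq_comm] using hv
  exact center_mem hD hcol x

theorem isUMDS_centers : IsUMDS (graph ι κ) (centers ι κ) := by
  refine ⟨isDomSet_centers, fun D hD => ?_, fun D hD hcard => ?_⟩
  · by_contra! hlt
    rw [card_centers] at hlt
    exact hlt.ne (congrArg card (eq_centers_of_card_le hD hlt.le) |>.trans card_centers)
  · exact eq_centers_of_card_le hD (hcard.trans card_centers).le

variable [DecidableEq ι] [DecidableEq κ]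

instance : DecidableRel (graph ι κ).Adj := fun _ _ => inferInstanceAs (Decidable (_ ∧ _))

theorem degree_center (x : ι ⊕ κ) : (graph ι κ).degree (x, 0) = 2 := by
  have : (graph ι κ).neighborFinset (x, 0) = {(x, 1), (x, 2)} := by
    ext ⟨y, k⟩
    rw [mem_neighborFinset, adj_comm, adj_center_iff]
    fin_cases k <;> simp [eq_comm]
  rw [← card_neighborFinset_eq_degree, this, card_pair (by simp)]

theorem degree_inl_one (i : ι) :
    (graph ι κ).degree (.inl i, 1) = 1 + 2 * Fintype.card κ := by
  have : (graph ι κ).neighborFinset (.inl i, 1) =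
      insert (.inl i, 0) ((univ.map .inr) ×ˢ {1, 2}) := by
    ext ⟨y, k⟩
    rw [mem_neighborFinset, adj_comm, adj_inl_one_iff]
    rcases y with _ | _ <;> fin_cases k <;> simp
  rw [← card_neighborFinset_eq_degree, this, card_insert_of_notMem (by simp), card_product]
  simp [mul_comm, add_comm]

theorem degree_inl_two (i : ι) : (graph ι κ).degree (.inl i, 2) = 1 := by
  have : (graph ι κ).neighborFinset (.inl i, 2) = {(.inl i, 0)} := by
    ext u
    rw [mem_neighborFinset, adj_comm, adj_inl_two_iff, mem_singleton]
  rw [← card_neighborFinset_eq_degree, this, card_singleton]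

theorem degree_inr {j : κ} {k : Fin 3} (hk : k ≠ 0) :
    (graph ι κ).degree (.inr j, k) = 1 + Fintype.card ι := by
  have : (graph ι κ).neighborFinset (.inr j, k) =
      insert (.inr j, 0) ((univ.map .inl) ×ˢ {1}) := by
    ext ⟨y, l⟩
    rw [mem_neighborFinset, adj_comm, adj_inr_iff hk]
    rcases y with _ | _ <;> simp [eq_comm]
  rw [← card_neighborFinset_eq_degree, this, card_insert_of_notMem (by simp), card_product]
  simp [add_comm]

theorem card_edgeFinset :
    (graph ι κ).edgeFinset.card =
      2 * (Fintype.card ι + Fintype.card κ) + 2 * Fintype.card ι * Fintype.card κ := by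
  have h := sum_degrees_eq_twice_card_edges (graph ι κ)
  simp only [Fintype.sum_prod_type, Fintype.sum_sum_type, Fin.sum_univ_three, degree_center,
    degree_inl_one, degree_inl_two, degree_inr one_ne_zero,
    degree_inr (by decide : (2 : Fin 3) ≠ 0), sum_const, card_univ, smul_eq_mul] at h
  refine Nat.eq_of_mul_eq_mul_left two_pos (h ▸ ?_)
  ring

end P3Join

theorem stmt13_general (γ : ℕ) :
    ∃ (G : SimpleGraph (Fin (3 * γ))) (D : Finset (Fin (3 * γ))),
      G.Colorable 2 ∧
      (∀ v, ∃ u, G.Adj u v) ∧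
      IsUMDS G D ∧ D.card = γ ∧
      G.edgeSet.ncard = 2 * γ + 2 * ((γ + 1) / 2) * (γ / 2) := by
  have hsplit : γ / 2 + (γ + 1) / 2 = γ := by omega
  have hcard : Fintype.card ((Fin (γ / 2) ⊕ Fin ((γ + 1) / 2)) × Fin 3) = 3 * γ := by
    simp [hsplit, mul_comm]
  let e := Iso.map (Fintype.equivFinOfCardEq hcard) (P3Join.graph _ _)
  refine ⟨_, (P3Join.centers _ _).map e.toEquiv.toEmbedding,
    P3Join.colorable_two.of_hom e.symm.toHom, fun v => ?_, P3Join.isUMDS_centers.map e, ?_, ?_⟩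
  · obtain ⟨u, hu⟩ := P3Join.exists_adj (e.symm v)
    exact ⟨e u, by simpa using e.map_adj_iff.2 hu⟩
  · simp [P3Join.card_centers, hsplit]
  · classical
    rw [← coe_edgeFinset, Set.ncard_coe_finset, ← e.card_edgeFinset_eq, P3Join.card_edgeFinset]
    simp only [Fintype.card_fin, hsplit]
    ring

theorem stmt13 (γ : ℕ) (hγ : 2 ≤ γ) :
    ∃ (G : SimpleGraph (Fin (3 * γ))) (D : Finset (Fin (3 * γ))),
      G.Colorable 2 ∧
      (∀ v, ∃ u, G.Adj u v) ∧
      IsUMDS G D ∧ D.card = γ ∧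
      G.edgeSet.ncard = 2 * γ + 2 * ((γ + 1) / 2) * (γ / 2) :=
  stmt13_general γ
end

section
/- Let G be a bipartite graph on n = 3γ vertices without isolated vertices with a unique minimum dominating set of size γ ≥ 2. Then the number of edges of G is at most 2γ + 2⌈γ/2⌉⌊γ/2⌋. -/
open Finset

theorem Nat.mul_le_ceil_half_mul_floor_half (a b : ℕ) :
    a * b ≤ ((a + b + 1) / 2) * ((a + b) / 2) := by
  have hsum : (a + b + 1) / 2 + (a + b) / 2 = a + b := by omega
  have hdiff : (a + b) / 2 ≤ (a + b + 1) / 2 ∧ (a + b + 1) / 2 ≤ (a + b) / 2 + 1 := by omega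
  zify at hsum hdiff ⊢
  nlinarith [sq_nonneg ((a : ℤ) - b)]

/-- A family of pairs any two of which agree in a coordinate is a star. -/
theorem Finset.card_le_max_of_fst_eq_or_snd_eq {α β : Type*} [DecidableEq α] [DecidableEq β]
    {M : Finset (α × β)} {P : Finset α} {Q : Finset β} (hM : M ⊆ P ×ˢ Q)
    (h : ∀ a ∈ M, ∀ b ∈ M, a.1 = b.1 ∨ a.2 = b.2) : #M ≤ max #P #Q := by
  by_cases hfst : ∀ a ∈ M, ∀ b ∈ M, a.1 = b.1
  · obtain rfl | ⟨a, ha⟩ := M.eq_empty_or_nonempty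
    · simp
    have hsub : M ⊆ {a.1} ×ˢ Q := fun c hc =>
      mem_product.2 ⟨mem_singleton.2 (hfst c hc a ha), (mem_product.1 (hM hc)).2⟩
    calc #M ≤ #({a.1} ×ˢ Q) := card_le_card hsub
      _ = #Q := by rw [card_product, card_singleton, one_mul]
      _ ≤ max #P #Q := le_max_right _ _
  · push Not at hfst
    obtain ⟨a, ha, b, hb, hab⟩ := hfst
    have hsnd : ∀ c ∈ M, c.2 = a.2 := by
      intro c hc
      by_contra hca
      have hca1 := (h c hc a ha).resolve_right hca
      rcases h c hc b hb with hcb | hcb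
      · exact hab (hca1.symm.trans hcb)
      · exact hca (hcb.trans ((h a ha b hb).resolve_left hab).symm)
    have hsub : M ⊆ P ×ˢ {a.2} := fun c hc =>
      mem_product.2 ⟨(mem_product.1 (hM hc)).1, mem_singleton.2 (hsnd c hc)⟩
    calc #M ≤ #(P ×ˢ {a.2}) := card_le_card hsub
      _ = #P := by rw [card_product, card_singleton, mul_one]
      _ ≤ max #P #Q := le_max_left _ _

theorem Finset.mem_pair_of_card_eq_two {α : Type*} [DecidableEq α] {s : Finset α} {x y z : α}
    (hs : #s = 2) (hx : x ∈ s) (hy : y ∈ s) (hxy : x ≠ y) (hz : z ∈ s) : z = x ∨ z = y := by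
  have hpair : s = {x, y} := (eq_of_subset_of_card_le (insert_subset hx (singleton_subset_iff.2 hy))
    (by rw [hs, card_pair hxy])).symm
  simpa [hpair] using hz

theorem Sym2.exists_eq_mk_of_map_eq {α β : Type*} {f : α → β} {e : Sym2 α} {a b : β}
    (h : Sym2.map f e = s(a, b)) : ∃ u v, e = s(u, v) ∧ f u = a ∧ f v = b := by
  induction e using Sym2.ind with
  | h u v =>
    rw [Sym2.map_mk, Sym2.eq_iff] at h
    rcases h with ⟨hu, hv⟩ | ⟨hu, hv⟩
    · exact ⟨u, v, rfl, hu, hv⟩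
    · exact ⟨v, u, Sym2.eq_swap, hv, hu⟩

section Domination

variable {V : Type*} {G : SimpleGraph V} {D D' : Finset V}

theorem IsUMDS.not_isDomSet_of_card_le (hD : IsUMDS G D) (hcard : #D' ≤ #D) (hne : D' ≠ D) :
    ¬ IsDomSet G D' := fun hD' =>
  hne (hD.2.2 D' hD' (le_antisymm hcard (hD.2.1 D' hD')))

variable [DecidableEq V] {i j u v w : V}

theorem IsUMDS.not_isDomSet_insert_erase (hD : IsUMDS G D) (hv : v ∈ D) (hw : w ∉ D) :
    ¬ IsDomSet G (insert w (D.erase v)) := by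
  refine hD.not_isDomSet_of_card_le ?_ fun h => hw (h ▸ mem_insert_self w _)
  calc #(insert w (D.erase v)) ≤ #(D.erase v) + 1 := card_insert_le _ _
    _ = #D := card_erase_add_one hv

variable [Fintype V] [DecidableRel G.Adj]

/-- The external private neighbours `epn(v, D)`. -/
def extPrivateNeighbors (G : SimpleGraph V) [DecidableRel G.Adj] (D : Finset V) (v : V) :
    Finset V :=
  {w | w ∉ D ∧ G.Adj v w ∧ ∀ u ∈ D, G.Adj u w → u = v}

theorem mem_extPrivateNeighbors :
    w ∈ extPrivateNeighbors G D v ↔ w ∉ D ∧ G.Adj v w ∧ ∀ u ∈ D, G.Adj u w → u = v := by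
  simp [extPrivateNeighbors]

theorem pairwiseDisjoint_extPrivateNeighbors :
    (D : Set V).PairwiseDisjoint (extPrivateNeighbors G D) := by
  intro a ha b _ hab
  refine disjoint_left.2 fun w hwa hwb => hab ?_
  exact (mem_extPrivateNeighbors.1 hwb).2.2 a ha (mem_extPrivateNeighbors.1 hwa).2.1

theorem biUnion_extPrivateNeighbors_subset_compl :
    D.biUnion (extPrivateNeighbors G D) ⊆ Dᶜ := by
  intro w hw
  obtain ⟨v, -, hwv⟩ := mem_biUnion.1 hw
  exact mem_compl.2 (mem_extPrivateNeighbors.1 hwv).1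

theorem IsDomSet.of_erase_subset (hD : IsDomSet G D) (hsub : D.erase v ⊆ D')
    (hv : v ∈ D' ∨ ∃ u ∈ D', G.Adj u v)
    (hepn : ∀ z ∈ extPrivateNeighbors G D v, z ∉ D' → ∃ u ∈ D', G.Adj u z) :
    IsDomSet G D' := by
  intro z hz
  by_cases hzv : z = v
  · subst hzv
    exact hv.resolve_left hz
  by_cases hzD : z ∈ D
  · exact absurd (hsub (mem_erase.2 ⟨hzv, hzD⟩)) hz
  obtain ⟨u, hu, huz⟩ := hD z hzD
  by_cases huv : u = v
  · subst huv
    by_cases hze : z ∈ extPrivateNeighbors G D u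
    · exact hepn z hze hz
    · have : ∃ u' ∈ D, G.Adj u' z ∧ u' ≠ u := by
        simpa [mem_extPrivateNeighbors, hzD, huz] using hze
      obtain ⟨u', hu', hu'z, hu'u⟩ := this
      exact ⟨u', hsub (mem_erase.2 ⟨hu'u, hu'⟩), hu'z⟩
  · exact ⟨u, hsub (mem_erase.2 ⟨huv, hu⟩), huz⟩

theorem IsDomSet.of_forall_extPrivateNeighbors
    (hcover : ∀ z ∉ D, ∃ v ∈ D, z ∈ extPrivateNeighbors G D v)
    (h : ∀ v ∈ D, v ∉ D' → (∃ u ∈ D', G.Adj u v) ∧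
      ∀ z ∈ extPrivateNeighbors G D v, z ∉ D' → ∃ u ∈ D', G.Adj u z) :
    IsDomSet G D' := by
  intro z hz
  by_cases hzD : z ∈ D
  · exact (h z hzD hz).1
  obtain ⟨v, hv, hzv⟩ := hcover z hzD
  by_cases hvD' : v ∈ D'
  · exact ⟨v, hvD', (mem_extPrivateNeighbors.1 hzv).2.1⟩
  · exact (h v hv hvD').2 z hzv hz

theorem IsUMDS.extPrivateNeighbors_nonempty_of_adj (hD : IsUMDS G D) (hu : u ∈ D) (hv : v ∈ D)
    (huv : G.Adj u v) : (extPrivateNeighbors G D v).Nonempty := by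
  rw [nonempty_iff_ne_empty]
  intro hempty
  refine hD.not_isDomSet_of_card_le (card_erase_le) (fun h => ?_)
    (hD.1.of_erase_subset subset_rfl (Or.inr ⟨u, mem_erase.2 ⟨huv.ne, hu⟩, huv⟩) (by simp [hempty]))
  exact notMem_erase v D (by rw [h]; exact hv)

/-- Exchanging `v` for `w` must not give another dominating set. -/
theorem IsUMDS.not_extPrivateNeighbors_subset_singleton (hD : IsUMDS G D) (hv : v ∈ D)
    (hw : w ∉ D) (hwv : G.Adj w v) : ¬ extPrivateNeighbors G D v ⊆ {w} := fun hsub =>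
  hD.not_isDomSet_insert_erase hv hw <| hD.1.of_erase_subset (subset_insert _ _)
    (Or.inr ⟨w, mem_insert_self _ _, hwv⟩)
    (fun z hz hzD' => absurd (by rw [mem_singleton.1 (hsub hz)]; exact mem_insert_self w _) hzD')

theorem IsUMDS.two_le_card_extPrivateNeighbors (hD : IsUMDS G D) (hiso : ∀ v, ∃ u, G.Adj u v)
    (hv : v ∈ D) : 2 ≤ #(extPrivateNeighbors G D v) := by
  by_contra! hlt
  obtain ⟨w, hw⟩ | hempty := (extPrivateNeighbors G D v).eq_empty_or_nonempty.symm
  · have hwD := (mem_extPrivateNeighbors.1 hw).1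
    exact hD.not_extPrivateNeighbors_subset_singleton hv hwD (mem_extPrivateNeighbors.1 hw).2.1.symm
      fun z hz => mem_singleton.2 (card_le_one.1 (by omega) z hz w hw)
  obtain ⟨u, huv⟩ := hiso v
  by_cases hu : u ∈ D
  · exact (hD.extPrivateNeighbors_nonempty_of_adj hu hv huv).ne_empty hempty
  · exact hD.not_extPrivateNeighbors_subset_singleton hv hu huv (by simp [hempty])

theorem card_extPrivateNeighbors_eq_two_and_exists_mem
    (hlow : ∀ v ∈ D, 2 ≤ #(extPrivateNeighbors G D v)) (hn : Fintype.card V = 3 * #D) :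
    (∀ v ∈ D, #(extPrivateNeighbors G D v) = 2) ∧
      ∀ z ∉ D, ∃ v ∈ D, z ∈ extPrivateNeighbors G D v := by
  have hunion := card_biUnion (pairwiseDisjoint_extPrivateNeighbors (G := G) (D := D))
  have hsub := biUnion_extPrivateNeighbors_subset_compl (G := G) (D := D)
  have hcompl : #Dᶜ = ∑ _v ∈ D, 2 := by rw [card_compl, hn, sum_const, smul_eq_mul]; omega
  have hsum : ∑ v ∈ D, #(extPrivateNeighbors G D v) = ∑ _v ∈ D, 2 :=
    le_antisymm (hunion ▸ hcompl ▸ card_le_card hsub) (sum_le_sum hlow)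
  refine ⟨fun v hv => ((sum_eq_sum_iff_of_le hlow).1 hsum.symm v hv).symm, fun z hz => ?_⟩
  have heq : D.biUnion (extPrivateNeighbors G D) = Dᶜ :=
    eq_of_subset_of_card_le hsub (by rw [hunion, hsum, hcompl])
  have hz' : z ∈ D.biUnion (extPrivateNeighbors G D) := heq ▸ mem_compl.2 hz
  simpa using hz'

/-- If `i ~ j`, a vertex outside `D` seeing both private neighbours of `j` could replace `j`. -/
theorem IsUMDS.eq_of_adj_of_adj (hD : IsUMDS G D) (hi : i ∈ D) (hj : j ∈ D) (hij : G.Adj i j)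
    (hj2 : #(extPrivateNeighbors G D j) = 2) (hw : w ∉ D) {x x' : V}
    (hx : x ∈ extPrivateNeighbors G D j) (hx' : x' ∈ extPrivateNeighbors G D j)
    (hwx : G.Adj w x) (hwx' : G.Adj w x') : x = x' := by
  by_contra hne
  refine hD.not_isDomSet_insert_erase hj hw <| hD.1.of_erase_subset (subset_insert _ _)
    (Or.inr ⟨i, mem_insert_of_mem (mem_erase.2 ⟨hij.ne, hi⟩), hij⟩) fun z hz _ => ?_
  refine ⟨w, mem_insert_self _ _, ?_⟩
  rcases mem_pair_of_card_eq_two hj2 hx hx' hne hz with rfl | rfl <;> assumption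

/-- Two disjoint edges between the private neighbours of `i` and of `j` would let these
four vertices replace `i` and `j`. -/
theorem IsUMDS.eq_or_eq_of_adj_of_adj (hD : IsUMDS G D)
    (hcover : ∀ z ∉ D, ∃ v ∈ D, z ∈ extPrivateNeighbors G D v)
    (h2 : ∀ v ∈ D, #(extPrivateNeighbors G D v) = 2) (hi : i ∈ D) (hj : j ∈ D) (hij : i ≠ j)
    {w w' x x' : V} (hw : w ∈ extPrivateNeighbors G D i) (hw' : w' ∈ extPrivateNeighbors G D i)
    (hx : x ∈ extPrivateNeighbors G D j) (hx' : x' ∈ extPrivateNeighbors G D j)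
    (hwx : G.Adj w x) (hwx' : G.Adj w' x') : w = w' ∨ x = x' := by
  by_contra! ⟨hww', hxx'⟩
  obtain ⟨hwD, hiw, -⟩ := mem_extPrivateNeighbors.1 hw
  obtain ⟨hx'D, hjx', -⟩ := mem_extPrivateNeighbors.1 hx'
  set D' := insert w (insert x' ((D.erase i).erase j))
  have hw_mem : w ∈ D' := mem_insert_self _ _
  have hx'_mem : x' ∈ D' := mem_insert_of_mem (mem_insert_self _ _)
  have hcard : #D' ≤ #D := by
    have hj' : j ∈ D.erase i := mem_erase.2 ⟨hij.symm, hj⟩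
    calc #D' ≤ #((D.erase i).erase j) + 1 + 1 :=
          (card_insert_le _ _).trans (Nat.add_le_add_right (card_insert_le _ _) 1)
      _ = #D := by rw [card_erase_add_one hj', card_erase_add_one hi]
  refine hD.not_isDomSet_of_card_le hcard (fun h => hwD (h ▸ hw_mem)) <|
    IsDomSet.of_forall_extPrivateNeighbors hcover fun v hv hvD' => ?_
  have hvij : v = i ∨ v = j := by
    by_contra! hne
    exact hvD' (mem_insert_of_mem (mem_insert_of_mem
      (mem_erase.2 ⟨hne.2, mem_erase.2 ⟨hne.1, hv⟩⟩)))
  rcases hvij with rfl | rfl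
  · refine ⟨⟨w, hw_mem, hiw.symm⟩, fun z hz hzD' => ?_⟩
    rcases mem_pair_of_card_eq_two (h2 v hv) hw hw' hww' hz with rfl | rfl
    · exact absurd hw_mem hzD'
    · exact ⟨x', hx'_mem, hwx'.symm⟩
  · refine ⟨⟨x', hx'_mem, hjx'.symm⟩, fun z hz hzD' => ?_⟩
    rcases mem_pair_of_card_eq_two (h2 v hv) hx hx' hxx' hz with rfl | rfl
    · exact ⟨w, hw_mem, hwx⟩
    · exact absurd hx'_mem hzD'

def extPrivateAdjPairs (G : SimpleGraph V) [DecidableRel G.Adj] (D : Finset V) (i j : V) :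
    Finset (V × V) :=
  {pq ∈ extPrivateNeighbors G D i ×ˢ extPrivateNeighbors G D j | G.Adj pq.1 pq.2}

theorem mem_extPrivateAdjPairs {pq : V × V} :
    pq ∈ extPrivateAdjPairs G D i j ↔ pq.1 ∈ extPrivateNeighbors G D i ∧
      pq.2 ∈ extPrivateNeighbors G D j ∧ G.Adj pq.1 pq.2 := by
  simp [extPrivateAdjPairs, and_assoc]

theorem IsUMDS.card_extPrivateAdjPairs_le_two (hD : IsUMDS G D)
    (hcover : ∀ z ∉ D, ∃ v ∈ D, z ∈ extPrivateNeighbors G D v)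
    (h2 : ∀ v ∈ D, #(extPrivateNeighbors G D v) = 2) (hi : i ∈ D) (hj : j ∈ D) (hij : i ≠ j) :
    #(extPrivateAdjPairs G D i j) ≤ 2 := by
  calc #(extPrivateAdjPairs G D i j)
      ≤ max #(extPrivateNeighbors G D i) #(extPrivateNeighbors G D j) := by
        refine card_le_max_of_fst_eq_or_snd_eq (filter_subset _ _) fun a ha b hb => ?_
        obtain ⟨ha1, ha2, ha⟩ := mem_extPrivateAdjPairs.1 ha
        obtain ⟨hb1, hb2, hb⟩ := mem_extPrivateAdjPairs.1 hb
        exact hD.eq_or_eq_of_adj_of_adj hcover h2 hi hj hij ha1 hb1 ha2 hb2 ha hb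
    _ = 2 := by rw [h2 i hi, h2 j hj, max_self]

theorem IsUMDS.card_extPrivateAdjPairs_le_one (hD : IsUMDS G D)
    (hcover : ∀ z ∉ D, ∃ v ∈ D, z ∈ extPrivateNeighbors G D v)
    (h2 : ∀ v ∈ D, #(extPrivateNeighbors G D v) = 2) (hi : i ∈ D) (hj : j ∈ D)
    (hij : G.Adj i j) : #(extPrivateAdjPairs G D i j) ≤ 1 := by
  refine card_le_one.2 fun a ha b hb => ?_
  obtain ⟨ha1, ha2, ha⟩ := mem_extPrivateAdjPairs.1 ha
  obtain ⟨hb1, hb2, hb⟩ := mem_extPrivateAdjPairs.1 hb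
  rcases hD.eq_or_eq_of_adj_of_adj hcover h2 hi hj hij.ne ha1 hb1 ha2 hb2 ha hb with h | h
  · refine Prod.ext h ?_
    exact hD.eq_of_adj_of_adj hi hj hij (h2 j hj) (mem_extPrivateNeighbors.1 ha1).1 ha2 hb2 ha
      (h ▸ hb)
  · refine Prod.ext ?_ h
    exact hD.eq_of_adj_of_adj hj hi hij.symm (h2 i hi) (mem_extPrivateNeighbors.1 ha2).1 ha1 hb1
      ha.symm (h ▸ hb.symm)

end Domination

section Counting

variable {V : Type*} [DecidableEq V] {D : Finset V}

def diagOrBichromaticPairs (D : Finset V) (c : V → Fin 2) : Finset (Sym2 V) :=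
  D.image (fun i => s(i, i)) ∪
    ({i ∈ D | c i = 0} ×ˢ {j ∈ D | c j ≠ 0}).image fun pq => s(pq.1, pq.2)

theorem card_diagOrBichromaticPairs_le (c : V → Fin 2) :
    #(diagOrBichromaticPairs D c) ≤ #D + #{i ∈ D | c i = 0} * #{i ∈ D | c i ≠ 0} := by
  refine (card_union_le _ _).trans (Nat.add_le_add card_image_le ?_)
  exact card_image_le.trans (card_product _ _).le

variable [Fintype V] {G : SimpleGraph V} [DecidableRel G.Adj] {π : V → V} {i j u v z : V}

/-- `π z` is the vertex of `D` of which `z` is a private neighbour. -/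
structure IsOwnerMap (G : SimpleGraph V) [DecidableRel G.Adj] (D : Finset V) (π : V → V) :
    Prop where
  apply_of_mem : ∀ v ∈ D, π v = v
  apply_mem : ∀ z, π z ∈ D
  mem_extPrivateNeighbors_apply : ∀ z ∉ D, z ∈ extPrivateNeighbors G D (π z)

theorem exists_isOwnerMap (hcover : ∀ z ∉ D, ∃ v ∈ D, z ∈ extPrivateNeighbors G D v) :
    ∃ π, IsOwnerMap G D π := by
  choose! f hf using hcover
  refine ⟨fun z => if z ∈ D then z else f z, fun v hv => if_pos hv, fun z => ?_,
    fun z hz => by simpa [hz] using (hf z hz).2⟩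
  by_cases hz : z ∈ D <;> simp [hz, hf]

namespace IsOwnerMap

theorem apply_eq_of_adj (hπ : IsOwnerMap G D π) (hu : u ∈ D) (hv : v ∉ D) (huv : G.Adj u v) :
    π v = u :=
  ((mem_extPrivateNeighbors.1 (hπ.mem_extPrivateNeighbors_apply v hv)).2.2 u hu huv).symm

theorem color_apply_ne (hπ : IsOwnerMap G D π) (C : G.Coloring (Fin 2)) (hz : z ∉ D) :
    C (π z) ≠ C z :=
  C.valid (mem_extPrivateNeighbors.1 (hπ.mem_extPrivateNeighbors_apply z hz)).2.1

theorem apply_eq_or_color_apply_ne (hπ : IsOwnerMap G D π) (C : G.Coloring (Fin 2))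
    (huv : G.Adj u v) : π u = π v ∨ C (π u) ≠ C (π v) := by
  have hC := C.valid huv
  by_cases hu : u ∈ D <;> by_cases hv : v ∈ D
  · exact Or.inr (by rwa [hπ.apply_of_mem u hu, hπ.apply_of_mem v hv])
  · exact Or.inl (by rw [hπ.apply_of_mem u hu, hπ.apply_eq_of_adj hu hv huv])
  · exact Or.inl (by rw [hπ.apply_of_mem v hv, hπ.apply_eq_of_adj hv hu huv.symm])
  · have hCu := hπ.color_apply_ne C hu
    have hCv := hπ.color_apply_ne C hv
    exact Or.inr (by omega)

theorem card_filter_map_eq_diag_le (hπ : IsOwnerMap G D π) (C : G.Coloring (Fin 2)) :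
    #{e ∈ G.edgeFinset | Sym2.map π e = s(i, i)} ≤ #(extPrivateNeighbors G D i) := by
  refine (card_le_card fun e he => ?_).trans (card_image_le (f := fun x => s(i, x)))
  obtain ⟨he, hmap⟩ := mem_filter.1 he
  obtain ⟨u, v, rfl, hu, hv⟩ := Sym2.exists_eq_mk_of_map_eq hmap
  have huv : G.Adj u v := SimpleGraph.mem_edgeFinset.1 he
  rw [mem_image]
  by_cases huD : u ∈ D
  · have hvD : v ∉ D := fun hvD =>
      huv.ne (by rw [← hπ.apply_of_mem u huD, ← hπ.apply_of_mem v hvD, hu, hv])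
    exact ⟨v, hv ▸ hπ.mem_extPrivateNeighbors_apply v hvD, by rw [← hu, hπ.apply_of_mem u huD]⟩
  by_cases hvD : v ∈ D
  · exact ⟨u, hu ▸ hπ.mem_extPrivateNeighbors_apply u huD,
      by rw [← hv, hπ.apply_of_mem v hvD, Sym2.eq_swap]⟩
  -- two private neighbours of `i` have the colour opposite to `i`, so they are not adjacent
  have hCu := hπ.color_apply_ne C huD
  have hCv := hπ.color_apply_ne C hvD
  have hC := C.valid huv
  rw [hu] at hCu
  rw [hv] at hCv
  omega

theorem filter_map_eq_subset (hπ : IsOwnerMap G D π) (hij : i ≠ j) :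
    {e ∈ G.edgeFinset | Sym2.map π e = s(i, j)} ⊆
      insert s(i, j) ((extPrivateAdjPairs G D i j).image fun pq => s(pq.1, pq.2)) := by
  intro e he
  obtain ⟨he, hmap⟩ := mem_filter.1 he
  obtain ⟨u, v, rfl, hu, hv⟩ := Sym2.exists_eq_mk_of_map_eq hmap
  have huv : G.Adj u v := SimpleGraph.mem_edgeFinset.1 he
  by_cases huD : u ∈ D <;> by_cases hvD : v ∈ D
  · exact mem_insert.2 (Or.inl (by rw [← hu, ← hv, hπ.apply_of_mem u huD, hπ.apply_of_mem v hvD]))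
  · exact absurd (by rw [← hu, ← hv, hπ.apply_of_mem u huD, hπ.apply_eq_of_adj huD hvD huv]) hij
  · exact absurd
      (by rw [← hu, ← hv, hπ.apply_of_mem v hvD, hπ.apply_eq_of_adj hvD huD huv.symm]) hij
  · refine mem_insert_of_mem (mem_image.2 ⟨(u, v), mem_extPrivateAdjPairs.2 ⟨?_, ?_, huv⟩, rfl⟩)
    · exact hu ▸ hπ.mem_extPrivateNeighbors_apply u huD
    · exact hv ▸ hπ.mem_extPrivateNeighbors_apply v hvD

theorem map_mem_diagOrBichromaticPairs (hπ : IsOwnerMap G D π) (C : G.Coloring (Fin 2))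
    {e : Sym2 V} (he : e ∈ G.edgeFinset) : Sym2.map π e ∈ diagOrBichromaticPairs D C := by
  revert he
  refine Sym2.inductionOn e fun u v he => ?_
  rw [Sym2.map_mk, diagOrBichromaticPairs, mem_union, mem_image, mem_image]
  have huv : G.Adj u v := SimpleGraph.mem_edgeFinset.1 he
  rcases hπ.apply_eq_or_color_apply_ne C huv with h | h
  · exact Or.inl ⟨π u, hπ.apply_mem u, by rw [h]⟩
  by_cases hu : C (π u) = 0
  · refine Or.inr ⟨(π u, π v), mem_product.2 ⟨mem_filter.2 ⟨hπ.apply_mem u, hu⟩,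
      mem_filter.2 ⟨hπ.apply_mem v, fun hv => h (hu.trans hv.symm)⟩⟩, rfl⟩
  · have hv : C (π v) = 0 := by omega
    refine Or.inr ⟨(π v, π u), mem_product.2 ⟨mem_filter.2 ⟨hπ.apply_mem v, hv⟩,
      mem_filter.2 ⟨hπ.apply_mem u, fun hu' => h (hu'.trans hv.symm)⟩⟩, Sym2.eq_swap⟩

end IsOwnerMap

theorem IsUMDS.card_filter_map_eq_le_two (hD : IsUMDS G D)
    (h2 : ∀ v ∈ D, #(extPrivateNeighbors G D v) = 2) (hπ : IsOwnerMap G D π)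
    (hi : i ∈ D) (hj : j ∈ D) (hij : i ≠ j) :
    #{e ∈ G.edgeFinset | Sym2.map π e = s(i, j)} ≤ 2 := by
  have hcover : ∀ z ∉ D, ∃ v ∈ D, z ∈ extPrivateNeighbors G D v :=
    fun z hz => ⟨π z, hπ.apply_mem z, hπ.mem_extPrivateNeighbors_apply z hz⟩
  have hsub := hπ.filter_map_eq_subset hij
  by_cases hadj : G.Adj i j
  · have hpairs := hD.card_extPrivateAdjPairs_le_one hcover h2 hi hj hadj
    calc _ ≤ #(insert s(i, j) ((extPrivateAdjPairs G D i j).image fun pq => s(pq.1, pq.2))) :=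
          card_le_card hsub
      _ ≤ #(extPrivateAdjPairs G D i j) + 1 :=
          (card_insert_le _ _).trans (Nat.add_le_add_right card_image_le 1)
      _ ≤ 2 := by omega
  · have hnotMem : s(i, j) ∉ {e ∈ G.edgeFinset | Sym2.map π e = s(i, j)} :=
      fun h => hadj (SimpleGraph.mem_edgeFinset.1 (mem_filter.1 h).1)
    calc _ ≤ #((extPrivateAdjPairs G D i j).image fun pq => s(pq.1, pq.2)) :=
          card_le_card ((subset_insert_iff_of_notMem hnotMem).1 hsub)
      _ ≤ #(extPrivateAdjPairs G D i j) := card_image_le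
      _ ≤ 2 := hD.card_extPrivateAdjPairs_le_two hcover h2 hi hj hij

theorem IsUMDS.card_edgeFinset_le (hD : IsUMDS G D) (C : G.Coloring (Fin 2))
    (h2 : ∀ v ∈ D, #(extPrivateNeighbors G D v) = 2) (hπ : IsOwnerMap G D π) :
    #G.edgeFinset ≤ 2 * (#D + #{i ∈ D | C i = 0} * #{i ∈ D | C i ≠ 0}) := by
  have hfiber : ∀ t ∈ diagOrBichromaticPairs D C,
      #{e ∈ G.edgeFinset | Sym2.map π e = t} ≤ 2 := by
    intro t ht
    rcases mem_union.1 ht with ht | ht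
    · obtain ⟨i, hi, rfl⟩ := mem_image.1 ht
      exact (hπ.card_filter_map_eq_diag_le C).trans (h2 i hi).le
    · obtain ⟨⟨i, j⟩, hij, rfl⟩ := mem_image.1 ht
      simp only [mem_product, mem_filter] at hij
      obtain ⟨⟨hi, hCi⟩, hj, hCj⟩ := hij
      exact hD.card_filter_map_eq_le_two h2 hπ hi hj fun h : i = j => hCj (h ▸ hCi)
  calc #G.edgeFinset ≤ 2 * #(diagOrBichromaticPairs D C) :=
        card_le_mul_card_image_of_maps_to (fun e he => hπ.map_mem_diagOrBichromaticPairs C he)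
          2 hfiber
    _ ≤ _ := Nat.mul_le_mul_left 2 (card_diagOrBichromaticPairs_le C)

end Counting

theorem stmt14_general {V : Type*} [Fintype V] (G : SimpleGraph V) (γ : ℕ)
    (hn : Fintype.card V = 3 * γ)
    (hbip : G.Colorable 2)
    (hiso : ∀ v : V, ∃ u, G.Adj u v)
    (D : Finset V) (hD : IsUMDS G D) (hcard : D.card = γ) :
    G.edgeSet.ncard ≤ 2 * γ + 2 * ((γ + 1) / 2) * (γ / 2) := by
  classical
  obtain ⟨C⟩ := hbip
  obtain ⟨h2, hcover⟩ := card_extPrivateNeighbors_eq_two_and_exists_mem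
    (fun v hv => hD.two_le_card_extPrivateNeighbors hiso hv) (by rw [hn, hcard])
  obtain ⟨π, hπ⟩ := exists_isOwnerMap hcover
  have hedges := hD.card_edgeFinset_le C h2 hπ
  have hcolors := Nat.mul_le_ceil_half_mul_floor_half #{i ∈ D | C i = 0} #{i ∈ D | C i ≠ 0}
  rw [card_filter_add_card_filter_not, hcard] at hcolors
  rw [← SimpleGraph.coe_edgeFinset, Set.ncard_coe_finset]
  rw [hcard] at hedges
  nlinarith

theorem stmt14 {V : Type*} [Fintype V] (G : SimpleGraph V) (γ : ℕ) (hγ : 2 ≤ γ)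
    (hn : Fintype.card V = 3 * γ)
    (hbip : G.Colorable 2)
    (hiso : ∀ v : V, ∃ u, G.Adj u v)
    (D : Finset V) (hD : IsUMDS G D) (hcard : D.card = γ) :
    G.edgeSet.ncard ≤ 2 * γ + 2 * ((γ + 1) / 2) * (γ / 2) :=
  stmt14_general G γ hn hbip hiso D hD hcard
end

section
/- For every γ ≥ 2 and n ≥ 3γ, there exists a graph G on n vertices without isolated vertices with domination number γ, a unique minimum dominating set D that is perfectly dominating (D is independent and every vertex outside D has exactly one neighbor in D), and exactly C(n−γ, 2) − γ(γ−2) edges. -/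
/-!
Take `D = {d₀, …, d_{γ-1}}` and give each `dᵢ` two private neighbours `aᵢ, bᵢ`, forming the
cell `{dᵢ, aᵢ, bᵢ}`; the remaining `n - 3γ` filler vertices are further neighbours of `d_{γ-1}`
and belong to its cell. Outside `D` put: a clique on the `aᵢ`, the edges `aᵢbⱼ` for `j < i`,
a clique on the fillers, and all edges between fillers and the `aᵢ` and `bⱼ` with `j < γ - 1`.

Each `dᵢ` is dominated only from its own cell, so a dominating set has at least `γ` vertices
and one of size `γ` meets every cell exactly once. If such a set used some `aᵢ` or filler, take
one of largest cell `K`: every possible dominator of `b_K` is then excluded. If instead it used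
some `bᵢ`, take one of smallest cell `I`: now `a_I` is undominated. Hence `D` is the unique
minimum dominating set. The edges are counted at their larger endpoint.
-/

open Finset

theorem SimpleGraph.card_edgeFinset_eq_sum_card_lt {V : Type*} [LinearOrder V] [Fintype V]
    (G : SimpleGraph V) [DecidableRel G.Adj] :
    #G.edgeFinset = ∑ v, #{u | u < v ∧ G.Adj u v} := by
  have h : #{p : V × V | p.1 < p.2 ∧ G.Adj p.1 p.2} = #G.edgeFinset := by
    refine card_nbij (fun p => s(p.1, p.2)) ?_ ?_ ?_
    · rintro ⟨u, v⟩ h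
      simp_all
    · rintro ⟨u, v⟩ h ⟨u', v'⟩ h' he
      simp only [coe_filter, mem_univ, true_and] at h h'
      rcases Sym2.eq_iff.mp he with ⟨rfl, rfl⟩ | ⟨rfl, rfl⟩
      · rfl
      · exact absurd (h.1.trans h'.1) (lt_irrefl _)
    · intro e he
      induction e using Sym2.ind with
      | _ u v =>
        have hadj : G.Adj u v := by simpa using he
        rcases hadj.ne.lt_or_gt with h | h
        · exact ⟨(u, v), by simp [h, hadj], rfl⟩
        · exact ⟨(v, u), by simp [h, hadj.symm], Sym2.eq_swap⟩
  rw [← h, card_filter, Fintype.sum_prod_type_right]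
  simp only [card_filter]

/-- Vertex `i`, `γ + i`, `2γ + i` (for `i < γ`) plays `dᵢ`, `aᵢ`, `bᵢ`; vertices `≥ 3γ` are the
fillers. `extremalRel γ x y` says that `x` is a neighbour of `y` below it. -/
def extremalRel (γ x y : ℕ) : Prop :=
  (γ ≤ y ∧ y < 2 * γ ∧ (x = y - γ ∨ γ ≤ x ∧ x < y)) ∨
  (2 * γ ≤ y ∧ y < 3 * γ ∧ (x = y - 2 * γ ∨ y < x + γ ∧ x < 2 * γ)) ∨
  (3 * γ ≤ y ∧ (x + 1 = γ ∨ γ ≤ x ∧ x + 1 < 3 * γ ∨ 3 * γ ≤ x ∧ x < y))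

instance (γ x y : ℕ) : Decidable (extremalRel γ x y) := by
  unfold extremalRel; infer_instance

def extremalGraph (γ n : ℕ) : SimpleGraph (Fin n) :=
  SimpleGraph.fromRel fun u v => extremalRel γ u v

instance (γ n : ℕ) : DecidableRel (extremalGraph γ n).Adj := fun u v =>
  inferInstanceAs (Decidable (u ≠ v ∧ (extremalRel γ u v ∨ extremalRel γ v u)))

def extremalDomSet (γ n : ℕ) : Finset (Fin n) := {v | v.val < γ}

def cell (γ v : ℕ) : ℕ :=
  if v < γ then v else if v < 2 * γ then v - γ else if v < 3 * γ then v - 2 * γ else γ - 1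

def lowerDegree (γ y : ℕ) : ℕ := #{x ∈ range y | extremalRel γ x y}

section
variable {γ n : ℕ}

@[simp]
lemma mem_extremalDomSet {v : Fin n} : v ∈ extremalDomSet γ n ↔ v.val < γ := by
  simp [extremalDomSet]

lemma card_extremalDomSet (hn : γ ≤ n) : #(extremalDomSet γ n) = γ := by
  rw [extremalDomSet, Fin.card_filter_val_lt]; omega

lemma lt_of_extremalRel {x y : ℕ} (h : extremalRel γ x y) : x < y := by
  unfold extremalRel at h; omega

lemma le_of_extremalRel {x y : ℕ} (h : extremalRel γ x y) : γ ≤ y := by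
  unfold extremalRel at h; omega

lemma cell_lt (hγ : 1 ≤ γ) (v : ℕ) : cell γ v < γ := by
  unfold cell; split_ifs <;> omega

lemma extremalRel_iff_of_lt {x y : ℕ} (hx : x < γ) :
    extremalRel γ x y ↔ γ ≤ y ∧ cell γ y = x := by
  unfold extremalRel cell; split_ifs <;> omega

lemma extremalGraph_adj_iff_extremalRel {u v : Fin n} (h : u < v) :
    (extremalGraph γ n).Adj u v ↔ extremalRel γ u v := by
  simp only [extremalGraph, SimpleGraph.fromRel_adj]
  constructor
  · rintro ⟨-, h' | h'⟩
    · exact h'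
    · exact absurd (lt_of_extremalRel h') (by simpa using h.le)
  · exact fun h' => ⟨h.ne, Or.inl h'⟩

lemma extremalGraph_adj_iff_of_lt {u v : Fin n} (hu : u.val < γ) :
    (extremalGraph γ n).Adj u v ↔ γ ≤ v.val ∧ cell γ v = u := by
  simp only [extremalGraph, SimpleGraph.fromRel_adj, extremalRel_iff_of_lt hu]
  constructor
  · rintro ⟨-, h | h⟩
    · exact h
    · exact absurd (le_of_extremalRel h) (by omega)
  · rintro ⟨h, h'⟩
    exact ⟨fun e => by omega, Or.inl ⟨h, h'⟩⟩

lemma extremalGraph_adj_cell (hγ : 1 ≤ γ) {v : Fin n} (hv : γ ≤ v.val) :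
    (extremalGraph γ n).Adj ⟨cell γ v, by have := cell_lt hγ v; omega⟩ v :=
  (extremalGraph_adj_iff_of_lt (cell_lt hγ v)).2 ⟨hv, rfl⟩

lemma eq_or_lt_cell_of_adj_b {K : ℕ} (hK : K < γ) (hn : 3 * γ ≤ n) {w : Fin n}
    (h : (extremalGraph γ n).Adj w ⟨2 * γ + K, by omega⟩) :
    w.val = K ∨ (γ ≤ w.val ∧ w.val < 2 * γ ∨ 3 * γ ≤ w.val) ∧ K < cell γ w := by
  simp only [extremalGraph, SimpleGraph.fromRel_adj] at h
  unfold extremalRel at h; unfold cell; split_ifs <;> omega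

lemma eq_or_cell_lt_of_adj_a {I : ℕ} (hI : I < γ) (hn : 3 * γ ≤ n) {w : Fin n}
    (h : (extremalGraph γ n).Adj w ⟨γ + I, by omega⟩) :
    w.val = I ∨ (γ ≤ w.val ∧ w.val < 2 * γ ∨ 3 * γ ≤ w.val) ∨
      2 * γ ≤ w.val ∧ w.val < 3 * γ ∧ cell γ w < I := by
  simp only [extremalGraph, SimpleGraph.fromRel_adj] at h
  unfold extremalRel at h; unfold cell; split_ifs <;> omega

lemma exists_adj_extremalGraph (hγ : 1 ≤ γ) (hn : 3 * γ ≤ n) (v : Fin n) :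
    ∃ u, (extremalGraph γ n).Adj u v := by
  by_cases hv : v.val < γ
  · refine ⟨⟨γ + v, by omega⟩, ((extremalGraph_adj_iff_of_lt hv).2 ⟨by simp, ?_⟩).symm⟩
    simp only [cell]; split_ifs <;> omega
  · exact ⟨_, extremalGraph_adj_cell hγ (by omega)⟩

lemma extremalGraph_not_adj_of_mem {u v : Fin n} (hu : u ∈ extremalDomSet γ n)
    (hv : v ∈ extremalDomSet γ n) : ¬(extremalGraph γ n).Adj u v := by
  rw [mem_extremalDomSet] at hu hv
  exact fun hadj => absurd ((extremalGraph_adj_iff_of_lt hu).1 hadj).1 (by omega)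

lemma existsUnique_adj_extremalGraph (hγ : 1 ≤ γ) {v : Fin n} (hv : v ∉ extremalDomSet γ n) :
    ∃! u, u ∈ extremalDomSet γ n ∧ (extremalGraph γ n).Adj u v := by
  simp only [mem_extremalDomSet, not_lt] at hv ⊢
  refine ⟨_, ⟨cell_lt hγ v, extremalGraph_adj_cell hγ hv⟩, fun u ⟨hu, hadj⟩ => ?_⟩
  exact Fin.ext ((extremalGraph_adj_iff_of_lt hu).1 hadj).2.symm

lemma exists_mem_cell_eq (hn : 3 * γ ≤ n) {D : Finset (Fin n)}
    (hD : IsDomSet (extremalGraph γ n) D) {i : ℕ} (hi : i < γ) : ∃ u ∈ D, cell γ u = i := by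
  by_cases hmem : (⟨i, by omega⟩ : Fin n) ∈ D
  · exact ⟨_, hmem, if_pos hi⟩
  · obtain ⟨u, hu, hadj⟩ := hD _ hmem
    exact ⟨u, hu, ((extremalGraph_adj_iff_of_lt (v := u) hi).1 hadj.symm).2⟩

lemma image_cell_of_isDomSet (hγ : 1 ≤ γ) (hn : 3 * γ ≤ n) {D : Finset (Fin n)}
    (hD : IsDomSet (extremalGraph γ n) D) : D.image (fun u : Fin n => cell γ u) = range γ := by
  ext i
  simp only [mem_image, mem_range]
  exact ⟨fun ⟨u, _, hu⟩ => hu ▸ cell_lt hγ u, exists_mem_cell_eq hn hD⟩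

lemma le_card_of_isDomSet (hγ : 1 ≤ γ) (hn : 3 * γ ≤ n) {D : Finset (Fin n)}
    (hD : IsDomSet (extremalGraph γ n) D) : γ ≤ #D := by
  simpa [image_cell_of_isDomSet hγ hn hD] using
    card_image_le (s := D) (f := fun u : Fin n => cell γ u)

lemma injOn_cell_of_isDomSet (hγ : 1 ≤ γ) (hn : 3 * γ ≤ n) {D : Finset (Fin n)}
    (hD : IsDomSet (extremalGraph γ n) D) (hcard : #D = γ) :
    Set.InjOn (fun u : Fin n => cell γ u) D :=
  card_image_iff.1 (by rw [image_cell_of_isDomSet hγ hn hD, card_range, hcard])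

lemma not_outer_of_injOn_cell (hγ : 1 ≤ γ) (hn : 3 * γ ≤ n) {D : Finset (Fin n)}
    (hD : IsDomSet (extremalGraph γ n) D) (hinj : Set.InjOn (fun u : Fin n => cell γ u) D) :
    ∀ u ∈ D, ¬(γ ≤ u.val ∧ u.val < 2 * γ ∨ 3 * γ ≤ u.val) := by
  by_contra! hout
  obtain ⟨u₀, hu₀, hmax⟩ := exists_max_image
    {u ∈ D | γ ≤ u.val ∧ u.val < 2 * γ ∨ 3 * γ ≤ u.val} (fun u : Fin n => cell γ u)
    (by simpa [Finset.Nonempty] using hout)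
  rw [mem_filter] at hu₀
  have hK := cell_lt hγ u₀
  have hb : (⟨2 * γ + cell γ u₀, by omega⟩ : Fin n) ∉ D := fun hb => by
    have := congrArg Fin.val (hinj hb hu₀.1 (by simp only [cell]; split_ifs <;> omega))
    simp only at this
    omega
  obtain ⟨w, hw, hadj⟩ := hD _ hb
  rcases eq_or_lt_cell_of_adj_b hK hn hadj with hwK | ⟨hwout, hlt⟩
  · have := congrArg Fin.val (hinj hw hu₀.1 (by simp only [cell, hwK]; split_ifs <;> omega))
    omega
  · exact absurd (hmax w (mem_filter.2 ⟨hw, hwout⟩)) (not_le.2 hlt)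

lemma lt_of_injOn_cell (hγ : 1 ≤ γ) (hn : 3 * γ ≤ n) {D : Finset (Fin n)}
    (hD : IsDomSet (extremalGraph γ n) D) (hinj : Set.InjOn (fun u : Fin n => cell γ u) D) :
    ∀ u ∈ D, u.val < γ := by
  have hout := not_outer_of_injOn_cell hγ hn hD hinj
  by_contra! hb
  obtain ⟨u₀, hu₀, hmin⟩ := exists_min_image {u ∈ D | γ ≤ u.val} (fun u : Fin n => cell γ u)
    (by simpa [Finset.Nonempty] using hb)
  rw [mem_filter] at hu₀
  have hI := cell_lt hγ u₀
  have hu₀b := hout u₀ hu₀.1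
  have ha : (⟨γ + cell γ u₀, by omega⟩ : Fin n) ∉ D := fun ha => hout _ ha (by
    simp only [cell]; split_ifs <;> omega)
  obtain ⟨w, hw, hadj⟩ := hD _ ha
  rcases eq_or_cell_lt_of_adj_a hI hn hadj with hwI | hwout | ⟨hwb, -, hlt⟩
  · have := congrArg Fin.val (hinj hw hu₀.1 (by simp only [cell, hwI]; split_ifs <;> omega))
    omega
  · exact hout w hw hwout
  · exact absurd (hmin w (mem_filter.2 ⟨hw, by omega⟩)) (not_le.2 hlt)

lemma eq_extremalDomSet_of_isDomSet (hγ : 1 ≤ γ) (hn : 3 * γ ≤ n) {D : Finset (Fin n)}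
    (hD : IsDomSet (extremalGraph γ n) D) (hcard : #D = γ) : D = extremalDomSet γ n :=
  eq_of_subset_of_card_le
    (fun u hu => mem_extremalDomSet.2 <|
      lt_of_injOn_cell hγ hn hD (injOn_cell_of_isDomSet hγ hn hD hcard) u hu)
    (by rw [card_extremalDomSet (by omega), hcard])

lemma isUMDS_extremalGraph (hγ : 1 ≤ γ) (hn : 3 * γ ≤ n) :
    IsUMDS (extremalGraph γ n) (extremalDomSet γ n) := by
  have hcard := card_extremalDomSet (γ := γ) (n := n) (by omega)
  refine ⟨fun v hv => ?_, fun D hD => hcard.symm ▸ le_card_of_isDomSet hγ hn hD,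
    fun D hD hD' => eq_extremalDomSet_of_isDomSet hγ hn hD (hD'.trans hcard)⟩
  obtain ⟨u, ⟨hu, hadj⟩, -⟩ := existsUnique_adj_extremalGraph hγ hv
  exact ⟨u, hu, hadj⟩

lemma lowerDegree_of_lt {y : ℕ} (hy : y < γ) : lowerDegree γ y = 0 :=
  card_eq_zero.2 <| filter_false_of_mem fun _ _ hx => absurd (le_of_extremalRel hx) (by omega)

lemma lowerDegree_a {i : ℕ} (hi : i < γ) : lowerDegree γ (γ + i) = i + 1 := by
  rw [lowerDegree, show {x ∈ range (γ + i) | extremalRel γ x (γ + i)} =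
      insert i (Ico γ (γ + i)) by
    ext x; simp only [mem_filter, mem_range, mem_insert, mem_Ico]
    unfold extremalRel; omega,
    card_insert_of_notMem (by simp only [mem_Ico]; omega), Nat.card_Ico]
  omega

lemma lowerDegree_b {i : ℕ} (hi : i < γ) : lowerDegree γ (2 * γ + i) = γ - i := by
  rw [lowerDegree, show {x ∈ range (2 * γ + i) | extremalRel γ x (2 * γ + i)} =
      insert i (Ico (γ + i + 1) (2 * γ)) by
    ext x; simp only [mem_filter, mem_range, mem_insert, mem_Ico]
    unfold extremalRel; omega,
    card_insert_of_notMem (by simp), Nat.card_Ico]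
  omega

lemma lowerDegree_filler (hγ : 1 ≤ γ) (k : ℕ) : lowerDegree γ (3 * γ + k) = 2 * γ + k := by
  rw [lowerDegree, show {x ∈ range (3 * γ + k) | extremalRel γ x (3 * γ + k)} =
      Ico (γ - 1) (3 * γ - 1) ∪ Ico (3 * γ) (3 * γ + k) by
    ext x; simp only [mem_filter, mem_range, mem_union, mem_Ico]
    unfold extremalRel; omega,
    card_union_of_disjoint (disjoint_left.2 fun x hx hx' => by
      simp only [mem_Ico] at hx hx'; omega),
    Nat.card_Ico, Nat.card_Ico]
  omega

lemma sum_lowerDegree (hγ : 1 ≤ γ) (c : ℕ) :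
    ∑ y ∈ range (3 * γ + c), lowerDegree γ y = γ * (γ + 1) + 2 * γ * c + c.choose 2 := by
  rw [show 3 * γ + c = γ + γ + γ + c by ring, sum_range_add, sum_range_add, sum_range_add,
    sum_eq_zero fun y hy => lowerDegree_of_lt (mem_range.1 hy)]
  have hab : ∑ i ∈ range γ, lowerDegree γ (γ + i) + ∑ i ∈ range γ, lowerDegree γ (γ + γ + i) =
      γ * (γ + 1) := by
    rw [← sum_add_distrib, sum_congr rfl fun i hi => show _ = γ + 1 by
      rw [mem_range] at hi
      rw [lowerDegree_a hi, ← two_mul, lowerDegree_b hi]; omega,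
      sum_const, card_range, smul_eq_mul]
  have hf : ∑ k ∈ range c, lowerDegree γ (γ + γ + γ + k) = 2 * γ * c + c.choose 2 := by
    rw [sum_congr rfl fun k _ => show _ = 2 * γ + k by
      rw [show γ + γ + γ = 3 * γ by ring, lowerDegree_filler hγ],
      sum_add_distrib, sum_const, card_range, smul_eq_mul, sum_range_id, Nat.choose_two_right]
    ring
  omega

lemma card_filter_lt_adj_extremalGraph (v : Fin n) :
    #{u | u < v ∧ (extremalGraph γ n).Adj u v} = lowerDegree γ v := by
  refine card_bij (fun u _ => u.val) (fun u hu => ?_) (fun u _ w _ => Fin.ext) fun x hx => ?_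
  · simp only [mem_filter, mem_univ, true_and] at hu
    simpa [← extremalGraph_adj_iff_extremalRel hu.1] using hu
  · simp only [mem_filter, mem_range] at hx
    refine ⟨⟨x, hx.1.trans v.isLt⟩, ?_, rfl⟩
    have hlt : (⟨x, hx.1.trans v.isLt⟩ : Fin n) < v := hx.1
    simpa [extremalGraph_adj_iff_extremalRel hlt] using ⟨hlt, hx.2⟩

lemma card_edgeFinset_extremalGraph (hγ : 2 ≤ γ) (hn : 3 * γ ≤ n) :
    #(extremalGraph γ n).edgeFinset = (n - γ).choose 2 - γ * (γ - 2) := by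
  obtain ⟨c, rfl⟩ : ∃ c, n = 3 * γ + c := ⟨n - 3 * γ, by omega⟩
  rw [SimpleGraph.card_edgeFinset_eq_sum_card_lt,
    sum_congr rfl fun v _ => card_filter_lt_adj_extremalGraph v,
    Fin.sum_univ_eq_sum_range (lowerDegree γ), sum_lowerDegree (by omega),
    show 3 * γ + c - γ = 2 * γ + c by omega]
  refine (Nat.sub_eq_of_eq_add ?_).symm
  qify [hγ, Nat.cast_choose_two]
  ring

end

theorem stmt18 (γ n : ℕ) (hγ : 2 ≤ γ) (hn : 3 * γ ≤ n) :
    ∃ (G : SimpleGraph (Fin n)) (D : Finset (Fin n)),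
      (∀ v, ∃ u, G.Adj u v) ∧
      IsUMDS G D ∧ D.card = γ ∧
      (∀ u ∈ D, ∀ v ∈ D, ¬ G.Adj u v) ∧
      (∀ v, v ∉ D → ∃! u, u ∈ D ∧ G.Adj u v) ∧
      G.edgeSet.ncard = (n - γ).choose 2 - γ * (γ - 2) := by
  refine ⟨extremalGraph γ n, extremalDomSet γ n, exists_adj_extremalGraph (by omega) hn,
    isUMDS_extremalGraph (by omega) hn, card_extremalDomSet (by omega),
    fun u hu v hv => extremalGraph_not_adj_of_mem hu hv,
    fun v => existsUnique_adj_extremalGraph (by omega), ?_⟩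
  rw [← SimpleGraph.coe_edgeFinset, Set.ncard_coe_finset]
  exact card_edgeFinset_extremalGraph hγ hn
end

section
/- Let D be a minimum dominating set of a graph G of order n with domination number γ and no isolated vertices. Then Σ_{x∈D} deg(x) = n − γ if and only if D is an independent set and every vertex outside D is adjacent to exactly one vertex of D. -/
theorem stmt19 {V : Type*} [Fintype V] (G : SimpleGraph V) [DecidableRel G.Adj]
    (n γ : ℕ) (hn : Fintype.card V = n)
    (hiso : ∀ v : V, ∃ u, G.Adj u v)
    (D : Finset V) (hD : IsDomSet G D) (hcard : D.card = γ)
    (hmin : ∀ D', IsDomSet G D' → D.card ≤ D'.card) :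
    (∑ x ∈ D, G.degree x = n - γ) ↔
      ((∀ u ∈ D, ∀ v ∈ D, ¬ G.Adj u v) ∧
        ∀ v, v ∉ D → ∃! u, u ∈ D ∧ G.Adj u v) := by
  classical
  have hdeg : ∀ x : V, G.degree x =
      (∑ v ∈ D, if G.Adj x v then 1 else 0) +
      (∑ v ∈ Dᶜ, if G.Adj x v then 1 else 0) := by
    intro x
    rw [Finset.sum_add_sum_compl]
    rw [SimpleGraph.degree, SimpleGraph.neighborFinset_eq_filter, Finset.card_filter]
  have hsplit : (∑ x ∈ D, G.degree x) =
      (∑ x ∈ D, ∑ v ∈ D, if G.Adj x v then 1 else 0) +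
      (∑ v ∈ Dᶜ, (D.filter (fun x => G.Adj x v)).card) := by
    have h2 : (∑ v ∈ Dᶜ, (D.filter (fun x => G.Adj x v)).card) =
        ∑ x ∈ D, ∑ v ∈ Dᶜ, if G.Adj x v then 1 else 0 := by
      simp only [Finset.card_filter]
      exact Finset.sum_comm
    rw [h2, ← Finset.sum_add_distrib]
    exact Finset.sum_congr rfl fun x _ => hdeg x
  have hcnt_pos : ∀ v ∈ Dᶜ, 1 ≤ (D.filter (fun x => G.Adj x v)).card := by
    intro v hv
    obtain ⟨u, hu, hadj⟩ := hD v (Finset.mem_compl.mp hv)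
    exact Finset.card_pos.mpr ⟨u, Finset.mem_filter.mpr ⟨hu, hadj⟩⟩
  have hccard : Dᶜ.card = n - γ := by
    rw [Finset.card_compl, hcard, hn]
  constructor
  · intro hsum
    rw [hsplit] at hsum
    have hB_ge : Dᶜ.card ≤ ∑ v ∈ Dᶜ, (D.filter (fun x => G.Adj x v)).card := by
      calc Dᶜ.card = ∑ _v ∈ Dᶜ, 1 := by simp
        _ ≤ _ := Finset.sum_le_sum hcnt_pos
    rw [hccard] at hB_ge
    have hA0 : (∑ x ∈ D, ∑ v ∈ D, if G.Adj x v then 1 else 0) = 0 := by omega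
    have hB : (∑ v ∈ Dᶜ, (D.filter (fun x => G.Adj x v)).card) = Dᶜ.card := by omega
    have hcnt1 : ∀ v ∈ Dᶜ, (D.filter (fun x => G.Adj x v)).card = 1 := by
      by_contra h
      push_neg at h
      obtain ⟨v, hv, hne⟩ := h
      have hlt : (∑ _v ∈ Dᶜ, 1) < ∑ v ∈ Dᶜ, (D.filter (fun x => G.Adj x v)).card :=
        Finset.sum_lt_sum hcnt_pos ⟨v, hv, lt_of_le_of_ne (hcnt_pos v hv) (Ne.symm hne)⟩
      rw [hB] at hlt
      simp at hlt
    constructor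
    · intro u hu v hv hadj
      have h1 := Finset.sum_eq_zero_iff.mp hA0 u hu
      have h2 := Finset.sum_eq_zero_iff.mp h1 v hv
      simp [hadj] at h2
    · intro v hv
      have h1 := hcnt1 v (Finset.mem_compl.mpr hv)
      obtain ⟨u, hu⟩ := Finset.card_eq_one.mp h1
      have hmem : u ∈ D.filter (fun x => G.Adj x v) := by
        rw [hu]; exact Finset.mem_singleton_self u
      rw [Finset.mem_filter] at hmem
      refine ⟨u, hmem, ?_⟩
      intro u' hu'
      have : u' ∈ D.filter (fun x => G.Adj x v) := Finset.mem_filter.mpr hu'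
      rw [hu, Finset.mem_singleton] at this
      exact this
  · rintro ⟨hind, huniq⟩
    rw [hsplit]
    have hA0 : (∑ x ∈ D, ∑ v ∈ D, if G.Adj x v then 1 else 0) = 0 := by
      apply Finset.sum_eq_zero
      intro x hx
      apply Finset.sum_eq_zero
      intro v hv
      simp [hind x hx v hv]
    have hcnt1 : ∀ v ∈ Dᶜ, (D.filter (fun x => G.Adj x v)).card = 1 := by
      intro v hv
      obtain ⟨u, hu, huu⟩ := huniq v (Finset.mem_compl.mp hv)
      rw [Finset.card_eq_one]
      refine ⟨u, ?_⟩
      ext w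
      simp only [Finset.mem_filter, Finset.mem_singleton]
      constructor
      · intro hw; exact huu w hw
      · intro hw; subst hw; exact hu
    rw [hA0, Finset.sum_congr rfl hcnt1]
    simp [hccard]
end
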